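/- arXiv:math/0601229 — 3 statements merged into one kernel-verified Lean document; each statement's English description precedes it below -/
import Mathlib

section
/- Let X be a locally compact Hausdorff space such that every closed subset A ⊆ X has the homotopy extension property in X: for every topological space Y, every continuous map f : X → Y, and every homotopy G : A × [0,1] → Y with G(·,0) = f|_A, there exists a homotopy J : X × [0,1] → Y with J(·,0) = f and J|_{A×[0,1]} = G. If there is a homotopy H : X × [0,1] → X with H(·,0) = id_X such that the closure of H(X × {1}) is compact, then for every compact C ⊆ X there is a homotopy J : X × [0,1] → X such that J(·,0) = id_X, the closure of J(X × {1}) is compact, and J(x,t) = x for all x ∈ C and all t ∈ [0,1]. -/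
open scoped unitInterval
open CategoryTheory

noncomputable section

/-- `M` is an open `n`-manifold: a noncompact, Hausdorff, second-countable space in which
every point has an open neighborhood homeomorphic to `ℝⁿ`. -/
def IsOpenNManifold (n : ℕ) (M : Type) [TopologicalSpace M] : Prop :=
  T2Space M ∧ SecondCountableTopology M ∧ ¬ CompactSpace M ∧
    ∀ x : M, ∃ U : Set M, IsOpen U ∧ x ∈ U ∧ Nonempty (U ≃ₜ (Fin n → ℝ))

/-- `X` is finitely dominated: there is a homotopy `H : X × [0,1] → X` starting at the identity
whose time-one image has compact closure. -/
def FinitelyDominated (X : Type) [TopologicalSpace X] : Prop :=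
  ∃ H : C(X × I, X), (∀ x, H (x, 0) = x) ∧
    IsCompact (closure (Set.range fun x => H (x, 1)))

/-- `X` has the homotopy type of a finite complex: it is homotopy equivalent to a compact
polyhedron, i.e. a finite union of simplices (convex hulls of finite sets) in some `ℝᴺ`. -/
def FiniteHomotopyType (X : Type) [TopologicalSpace X] : Prop :=
  ∃ (N : ℕ) (S : Finset (Finset (Fin N → ℝ))),
    Nonempty (ContinuousMap.HomotopyEquiv X
      (⋃ s ∈ S, convexHull ℝ (s : Set (Fin N → ℝ)) : Set (Fin N → ℝ)))

/-- `N` is a clean neighborhood of infinity in `X`: `N` is closed, the closure of its complement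
is compact, and its topological frontier is bicollared in `X`. -/
def IsCleanNbhdOfInf {X : Type} [TopologicalSpace X] (N : Set X) : Prop :=
  IsClosed N ∧ IsCompact (closure Nᶜ) ∧
    ∃ (U : Set X) (e : (frontier N × Set.Ioo (-1 : ℝ) 1) ≃ₜ U),
      IsOpen U ∧ frontier N ⊆ U ∧
      (∀ x : frontier N, (e (x, ⟨0, by norm_num⟩) : X) = (x : X)) ∧
      ((fun z => ((e z : X))) '' {z : frontier N × Set.Ioo (-1 : ℝ) 1 | 0 ≤ (z.2 : ℝ)}
        = U ∩ N)

/-- `X` is one-ended: it is noncompact and every compact set is contained in a compact set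
with connected complement. -/
def OneEnded (X : Type) [TopologicalSpace X] : Prop :=
  ¬ CompactSpace X ∧ ∀ K : Set X, IsCompact K →
    ∃ K' : Set X, IsCompact K' ∧ K ⊆ K' ∧ IsConnected K'ᶜ

/-- The neighborhood of infinity `W(N,m) = (N × ℝ) ∪ (M × ((−∞,−m] ∪ [m,∞)))` in `M × ℝ`. -/
def WSet {M : Type} (N : Set M) (m : ℝ) : Set (M × ℝ) :=
  (N ×ˢ Set.univ) ∪ (Set.univ ×ˢ (Set.Iic (-m) ∪ Set.Ici m))

/-- The subset `W⁺(N,m) = (N × ℝ) ∪ (M × [m,∞))` of `M × ℝ`. -/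
def WPlusSet {M : Type} (N : Set M) (m : ℝ) : Set (M × ℝ) :=
  (N ×ˢ Set.univ) ∪ (Set.univ ×ˢ Set.Ici m)

/-- If `Q ⊆ P` and `m ≤ m'` then `W(Q,m') ⊆ W(P,m)`. -/
theorem WSet_mono {M : Type} {P Q : Set M} (h : Q ⊆ P) {m m' : ℝ} (hm : m ≤ m') :
    WSet Q m' ⊆ WSet P m := by
  rintro ⟨x, t⟩ (⟨hx, -⟩ | ⟨-, ht⟩)
  · exact Or.inl ⟨h hx, Set.mem_univ _⟩
  · refine Or.inr ⟨Set.mem_univ _, ?_⟩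
    rcases ht with ht | ht
    · simp only [Set.mem_Iic] at ht ⊢
      exact Or.inl (Set.mem_Iic.mpr (by linarith))
    · simp only [Set.mem_Ici] at ht ⊢
      exact Or.inr (Set.mem_Ici.mpr (by linarith))

/-- The inclusion between subspaces, as a continuous map. -/
def inclCM {X : Type} [TopologicalSpace X] {S T : Set X} (h : S ⊆ T) : C(S, T) :=
  ⟨Set.inclusion h, continuous_inclusion h⟩

/-- The inclusion of a subspace into the ambient space, as a continuous map. -/
def valCM {X : Type} [TopologicalSpace X] (S : Set X) : C(S, X) :=
  ⟨Subtype.val, continuous_subtype_val⟩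

/-- The homomorphism of fundamental groups induced by a continuous map. -/
def indHom {X Y : Type} [TopologicalSpace X] [TopologicalSpace Y]
    (f : C(X, Y)) (x : X) : FundamentalGroup X x →* FundamentalGroup Y (f x) :=
  CategoryTheory.Functor.mapEnd (FundamentalGroupoid.mk x)
    (FundamentalGroupoid.fundamentalGroupoidFunctor.map (X := TopCat.of X) (Y := TopCat.of Y) (TopCat.ofHom f))

/-- The change-of-basepoint isomorphism `π₁(X,q) ≃* π₁(X,p)` determined by a path `α` from `p`
to `q`; it sends the class of a loop `τ` to the class of `α ∗ τ ∗ α⁻¹`. -/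
def basepointChange {X : Type} [TopologicalSpace X] {p q : X} (α : Path p q) :
    FundamentalGroup X q ≃* FundamentalGroup X p :=
  (FundamentalGroup.fundamentalGroupMulEquivOfPath α).symm

/-- The path `α × {0}` in a subset `S` of `M × ℝ` determined by a path `α` in `M`. -/
def pathZeroIn {M : Type} [TopologicalSpace M] {p q : M} (α : Path p q)
    {S : Set (M × ℝ)} (h : ∀ t : I, ((α t : M), (0 : ℝ)) ∈ S) :
    Path (⟨(p, 0), by simpa using h 0⟩ : S) (⟨(q, 0), by simpa using h 1⟩ : S) where
  toFun t := ⟨(α t, 0), h t⟩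
  continuous_toFun := ((α.continuous.prodMk continuous_const)).subtype_mk _
  source' := Subtype.ext (by simp)
  target' := Subtype.ext (by simp)


theorem improved_domination (X : Type) [TopologicalSpace X]
    [LocallyCompactSpace X] [T2Space X]
    (hHEP : ∀ A : Set X, IsClosed A → ∀ (Y : Type) [TopologicalSpace Y],
      ∀ (f : C(X, Y)) (G : C(↥A × I, Y)),
      (∀ a : A, G (a, 0) = f a) →
      ∃ J : C(X × I, Y), (∀ x, J (x, 0) = f x) ∧
        ∀ (a : A) (t : I), J ((a : X), t) = G (a, t))
    (H : C(X × I, X)) (hH0 : ∀ x, H (x, 0) = x)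
    (hH1 : IsCompact (closure (Set.range fun x => H (x, 1))))
    (C : Set X) (hC : IsCompact C) :
    ∃ J : C(X × I, X), (∀ x, J (x, 0) = x) ∧
      IsCompact (closure (Set.range fun x => J (x, 1))) ∧
      ∀ x ∈ C, ∀ t : I, J (x, t) = x := by
  obtain ⟨V, hVc, hCV⟩ := exists_compact_superset hC
  obtain ⟨u, hu0, hu1, hu01⟩ :=
    exists_continuous_zero_one_of_isCompact hC isOpen_interior.isClosed_compl
      (Set.disjoint_left.mpr fun a ha hna => hna (hCV ha))
  have hmem : ∀ (x : X) (t : I), (t : ℝ) * u x ∈ I := fun x t =>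
    ⟨mul_nonneg t.2.1 (hu01 x).1, mul_le_one₀ t.2.2 (hu01 x).1 (hu01 x).2⟩
  let φ : C(X × I, X × I) :=
    ⟨fun p => (p.1, ⟨(p.2 : ℝ) * u p.1, hmem p.1 p.2⟩),
      continuous_fst.prodMk (((continuous_subtype_val.comp continuous_snd).mul
        (u.continuous.comp continuous_fst)).subtype_mk _)⟩
  refine ⟨H.comp φ, ?_, ?_, ?_⟩
  · intro x
    have : φ (x, 0) = (x, 0) := by
      simp only [φ, ContinuousMap.coe_mk]
      exact Prod.ext rfl (Subtype.ext (by simp))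
    simp only [ContinuousMap.comp_apply, this, hH0]
  · set D := H '' (V ×ˢ (Set.univ : Set I)) ∪ closure (Set.range fun x => H (x, 1)) with hD
    have hDc : IsCompact D := ((hVc.prod isCompact_univ).image H.continuous).union hH1
    have hsub : Set.range (fun x => (H.comp φ) (x, 1)) ⊆ D := by
      rintro _ ⟨x, rfl⟩
      by_cases hx : x ∈ V
      · exact Or.inl ⟨(x, ⟨((1 : I) : ℝ) * u x, hmem x 1⟩), ⟨hx, trivial⟩, rfl⟩
      · have hx' : x ∈ (interior V)ᶜ := fun h => hx (interior_subset h)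
        have hu : u x = 1 := hu1 hx'
        have : φ (x, 1) = (x, 1) := by
          simp only [φ, ContinuousMap.coe_mk]
          exact Prod.ext rfl (Subtype.ext (by simp [hu]))
        right
        exact subset_closure ⟨x, show H (x, 1) = (H.comp φ) (x, 1) by
          rw [ContinuousMap.comp_apply, this]⟩
    exact hDc.of_isClosed_subset isClosed_closure
      (closure_minimal hsub hDc.isClosed)
  · intro x hx t
    have hu : u x = 0 := hu0 hx
    have : φ (x, t) = (x, 0) := by
      simp only [φ, ContinuousMap.coe_mk]
      exact Prod.ext rfl (Subtype.ext (by simp [hu]))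
    simp only [ContinuousMap.comp_apply, this, hH0]


end
end

section
/- Let M be a connected open n-manifold, let N ⊆ M be a clean neighborhood of infinity, let C = M ∖ int(N), and let m > 0. Then W(N,m) strong deformation retracts onto the subspace (M × {m}) ∪ (∂C × [−m,m]) ∪ (C × {−m}), where ∂C denotes the topological frontier of C in M. -/
open scoped unitInterval
open CategoryTheory

noncomputable section

namespace WDRAux

variable {M : Type} [TopologicalSpace M]
variable (N U : Set M) (e : (frontier N × Set.Ioo (-1 : ℝ) 1) ≃ₜ U)

open Classical in
/-- collar coordinate, junk value 1 outside U -/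
def sig (x : M) : ℝ := if h : x ∈ U then ((e.symm ⟨x, h⟩).2 : ℝ) else 1

open Classical in
/-- move along collar fiber -/
def cpt (x : M) (r : ℝ) : M :=
  if h : x ∈ U ∧ r ∈ Set.Ioo (-1 : ℝ) 1 then (e ((e.symm ⟨x, h.1⟩).1, ⟨r, h.2⟩) : M) else x

def emap : (frontier N × Set.Ioo (-1 : ℝ) 1) → M := fun z => (e z : M)

def P2 : Set M := emap N U e '' {z | (z.2 : ℝ) ∈ Set.Icc 0 (1/2)}
def Vh : Set M := emap N U e '' {z | (z.2 : ℝ) < 1/2}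
def Vp : Set M := emap N U e '' {z | 0 < (z.2 : ℝ)}

def tauF (m t : ℝ) : ℝ := max (-m) (min t m)
def aF (u : ℝ) : ℝ := min (2*u) 1
def bF (u : ℝ) : ℝ := max (2*u - 1) 0
def ellF (s th : ℝ) : ℝ := th + s + s^2*(1 - th)

variable (m : ℝ)

def rr (x : M) (t u : ℝ) : ℝ :=
  (1 - bF u) * sig N U e x + bF u * max (ellF (2 * sig N U e x) (tauF m t / m) - 1) 0 / 2

def phi1 (p : (M × ℝ) × ℝ) : M × ℝ :=
  (p.1.1, (1 - aF p.2) * p.1.2 + aF p.2 * ((1 - bF p.2) * tauF m p.1.2 + bF p.2 * m))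

def phi3 (p : (M × ℝ) × ℝ) : M × ℝ :=
  (p.1.1, (1 - aF p.2) * p.1.2 + aF p.2 * tauF m p.1.2)

def phi2 (p : (M × ℝ) × ℝ) : M × ℝ :=
  (cpt N U e p.1.1 (rr N U e m p.1.1 p.1.2 p.2),
   (1 - aF p.2) * p.1.2 + aF p.2 * ((1 - bF p.2) * tauF m p.1.2 +
     bF p.2 * (m * min (ellF (2 * sig N U e p.1.1) (tauF m p.1.2 / m)) 1)))

open Classical in
def fFull (p : (M × ℝ) × ℝ) : M × ℝ :=
  if p.1.1 ∈ closure Nᶜ then phi3 m p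
  else if p.1.1 ∈ P2 N U e then phi2 N U e m p
  else phi1 m p

/-! ### elementary real facts -/

lemma tauF_mem (hm : 0 < m) (t : ℝ) : tauF m t ∈ Set.Icc (-m) m := by
  constructor
  · exact le_max_left _ _
  · exact max_le (by linarith) (min_le_right _ _)

lemma tauF_of_ge {t : ℝ} (hm : 0 < m) (h : m ≤ t) : tauF m t = m := by
  rw [tauF, min_eq_right h, max_eq_right (by linarith)]

lemma tauF_of_le {t : ℝ} (hm : 0 < m) (h : t ≤ -m) : tauF m t = -m := by
  rw [tauF, min_eq_left (by linarith), max_eq_left h]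

lemma tauF_of_mem {t : ℝ} (h1 : -m ≤ t) (h2 : t ≤ m) : tauF m t = t := by
  rw [tauF, min_eq_left h2, max_eq_right h1]

lemma aF_mem {u : ℝ} (h0 : 0 ≤ u) (h1 : u ≤ 1) : aF u ∈ Set.Icc (0:ℝ) 1 :=
  ⟨le_min (by linarith) (by norm_num), min_le_right _ _⟩

lemma bF_mem {u : ℝ} (h0 : 0 ≤ u) (h1 : u ≤ 1) : bF u ∈ Set.Icc (0:ℝ) 1 :=
  ⟨le_max_right _ _, max_le (by linarith) (by norm_num)⟩

lemma aF_zero : aF 0 = 0 := by norm_num [aF]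
lemma bF_zero : bF 0 = 0 := by norm_num [bF]
lemma aF_one : aF 1 = 1 := by norm_num [aF]
lemma bF_one : bF 1 = 1 := by norm_num [bF]

lemma ellF_ge {s th : ℝ} (hs : 0 ≤ s) (hth : th ≤ 1) : th ≤ ellF s th := by
  simp only [ellF]; nlinarith

lemma ellF_le {s th : ℝ} (hs0 : 0 ≤ s) (hs1 : s ≤ 1) (hl : -1 ≤ th) (hr : th ≤ 1) :
    ellF s th ≤ 1 + s := by
  simp only [ellF]
  nlinarith [mul_nonneg (by linarith : (0:ℝ) ≤ 1 - th) (by nlinarith : (0:ℝ) ≤ 1 - s^2)]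

/-! ### collar facts -/

lemma emap_inj : Function.Injective (emap N U e) :=
  fun z w h => e.injective (Subtype.ext h)

lemma emap_mem_U (z : frontier N × Set.Ioo (-1:ℝ) 1) : emap N U e z ∈ U := (e z).2

lemma sig_emap (z : frontier N × Set.Ioo (-1:ℝ) 1) : sig N U e (emap N U e z) = (z.2 : ℝ) := by
  rw [sig, dif_pos (emap_mem_U N U e z)]
  congr 1
  have : (⟨emap N U e z, emap_mem_U N U e z⟩ : U) = e z := rfl
  rw [this, e.symm_apply_apply]

lemma sig_mem_Ioo {x : M} (hx : x ∈ U) : sig N U e x ∈ Set.Ioo (-1:ℝ) 1 := by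
  rw [sig, dif_pos hx]; exact (e.symm ⟨x, hx⟩).2.2

lemma cpt_sig_self {x : M} (hx : x ∈ U) : cpt N U e x (sig N U e x) = x := by
  rw [cpt, dif_pos ⟨hx, sig_mem_Ioo N U e hx⟩]
  have h2 : (⟨sig N U e x, sig_mem_Ioo N U e hx⟩ : Set.Ioo (-1:ℝ) 1) = (e.symm ⟨x, hx⟩).2 := by
    apply Subtype.ext
    show sig N U e x = _
    rw [sig, dif_pos hx]
  rw [h2]
  have : ((e.symm ⟨x, hx⟩).1, (e.symm ⟨x, hx⟩).2) = e.symm ⟨x, hx⟩ := rfl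
  rw [this, e.apply_symm_apply]

variable (heN : (fun z : frontier N × Set.Ioo (-1 : ℝ) 1 => ((e z : M))) ''
    {z | 0 ≤ (z.2 : ℝ)} = U ∩ N)
variable (he0 : ∀ y : frontier N, (e (y, ⟨0, by norm_num⟩) : M) = (y : M))

include heN in
lemma emap_mem_N {z : frontier N × Set.Ioo (-1:ℝ) 1} (h : 0 ≤ (z.2:ℝ)) : emap N U e z ∈ N := by
  have : emap N U e z ∈ U ∩ N := by rw [← heN]; exact ⟨z, h, rfl⟩
  exact this.2

include heN in
lemma cpt_mem_N {x : M} (hx : x ∈ U) {r : ℝ} (h0 : 0 ≤ r) (h1 : r < 1) :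
    cpt N U e x r ∈ N := by
  rw [cpt, dif_pos ⟨hx, ⟨by linarith, h1⟩⟩]
  exact emap_mem_N N U e heN h0

include he0 in
lemma cpt_zero_mem_fr {x : M} (hx : x ∈ U) : cpt N U e x 0 ∈ frontier N := by
  rw [cpt, dif_pos ⟨hx, by norm_num⟩, he0]
  exact ((e.symm ⟨x, hx⟩).1).2

omit he0 in
lemma cpt_zero_self {x : M} (hx : x ∈ U) (hs : sig N U e x = 0) : cpt N U e x 0 = x := by
  have := cpt_sig_self N U e hx
  rwa [hs] at this

lemma P2_subset_U : P2 N U e ⊆ U := by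
  rintro x ⟨z, -, rfl⟩; exact emap_mem_U N U e z

lemma Vh_subset_U : Vh N U e ⊆ U := by
  rintro x ⟨z, -, rfl⟩; exact emap_mem_U N U e z

lemma sig_mem_P2 {x : M} (hx : x ∈ P2 N U e) : sig N U e x ∈ Set.Icc (0:ℝ) (1/2) := by
  obtain ⟨z, hz, rfl⟩ := hx
  rw [sig_emap]; exact hz

include he0 in
lemma fr_subset_Vh : frontier N ⊆ Vh N U e := by
  intro y hy
  exact ⟨(⟨y, hy⟩, ⟨0, by norm_num⟩), by norm_num, he0 ⟨y, hy⟩⟩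

lemma isOpenMap_emap (hUo : IsOpen U) : IsOpenMap (emap N U e) :=
  hUo.isOpenMap_subtype_val.comp e.isOpenMap

lemma Vh_open (hUo : IsOpen U) : IsOpen (Vh N U e) :=
  isOpenMap_emap N U e hUo _ (isOpen_lt (by fun_prop) continuous_const)

lemma Vp_open (hUo : IsOpen U) : IsOpen (Vp N U e) :=
  isOpenMap_emap N U e hUo _ (isOpen_lt continuous_const (by fun_prop))

include heN in
lemma Vp_subset_int (hUo : IsOpen U) : Vp N U e ⊆ interior N := by
  apply (Vp_open N U e hUo).subset_interior_iff.mpr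
  rintro x ⟨z, hz, rfl⟩
  exact emap_mem_N N U e heN (le_of_lt hz)

include heN he0 in
lemma fr_subset_closure_int (hUo : IsOpen U) : frontier N ⊆ closure (interior N) := by
  intro y hy
  have hsub : closure (Vp N U e) ⊆ closure (interior N) :=
    closure_mono (Vp_subset_int N U e heN hUo)
  apply hsub
  set g : Set.Ioo (-1:ℝ) 1 → M := fun r => emap N U e (⟨y, hy⟩, r) with hg
  have hgc : Continuous g := by
    apply continuous_subtype_val.comp
    exact e.continuous.comp (by fun_prop)
  have h0 : g ⟨0, by norm_num⟩ = y := he0 ⟨y, hy⟩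
  have hmem : (⟨0, by norm_num⟩ : Set.Ioo (-1:ℝ) 1) ∈
      closure {r : Set.Ioo (-1:ℝ) 1 | 0 < (r:ℝ)} := by
    rw [closure_subtype]
    have himg : Subtype.val '' {r : Set.Ioo (-1:ℝ) 1 | 0 < (r:ℝ)} = Set.Ioo (0:ℝ) 1 := by
      ext r
      constructor
      · rintro ⟨⟨r', hr'⟩, hpos, rfl⟩; exact ⟨hpos, hr'.2⟩
      · rintro ⟨h1, h2⟩; exact ⟨⟨r, ⟨by linarith, h2⟩⟩, h1, rfl⟩
    rw [himg, closure_Ioo (by norm_num : (0:ℝ) ≠ 1)]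
    exact ⟨le_refl 0, by norm_num⟩
  have himg2 : g '' {r : Set.Ioo (-1:ℝ) 1 | 0 < (r:ℝ)} ⊆ Vp N U e := by
    rintro _ ⟨r, hr, rfl⟩; exact ⟨(⟨y, hy⟩, r), hr, rfl⟩
  have : y ∈ closure (g '' {r : Set.Ioo (-1:ℝ) 1 | 0 < (r:ℝ)}) := by
    rw [← h0]
    exact image_closure_subset_closure_image hgc ⟨⟨0, by norm_num⟩, hmem, rfl⟩
  exact closure_mono himg2 this

include heN he0 in
lemma fr_eq (hUo : IsOpen U) (hNc : IsClosed N) :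
    frontier ((interior N)ᶜ) = frontier N := by
  rw [frontier_compl]
  apply subset_antisymm
  · intro x hx
    rw [frontier, interior_interior] at hx
    rw [frontier, hNc.closure_eq]
    exact ⟨((closure_mono interior_subset).trans hNc.closure_eq.subset) hx.1, hx.2⟩
  · intro x hx
    rw [frontier, interior_interior]
    exact ⟨fr_subset_closure_int N U e heN he0 hUo hx, hx.2⟩

include heN in
lemma emap_mem_N_iff (z : frontier N × Set.Ioo (-1:ℝ) 1) :
    emap N U e z ∈ N ↔ 0 ≤ (z.2 : ℝ) := by
  constructor
  · intro h
    have : emap N U e z ∈ U ∩ N := ⟨emap_mem_U N U e z, h⟩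
    rw [← heN] at this
    obtain ⟨w, hw, hwz⟩ := this
    rwa [← emap_inj N U e hwz]
  · exact emap_mem_N N U e heN

include heN in
lemma sig_eq_zero_of_mem (hUo : IsOpen U) {x : M} (h2 : x ∈ P2 N U e)
    (h3 : x ∈ closure Nᶜ) : sig N U e x = 0 := by
  obtain ⟨z, hz, rfl⟩ := h2
  rw [sig_emap]
  by_contra h
  have hpos : 0 < (z.2 : ℝ) := lt_of_le_of_ne hz.1 (Ne.symm h)
  have : emap N U e z ∈ interior N := Vp_subset_int N U e heN hUo ⟨z, hpos, rfl⟩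
  rw [closure_compl] at h3
  exact h3 this

lemma sig_eq_half_of_not_Vh {x : M} (h2 : x ∈ P2 N U e) (hx : x ∉ Vh N U e) :
    sig N U e x = 1/2 := by
  obtain ⟨z, hz, rfl⟩ := h2
  rw [sig_emap]
  by_contra h
  exact hx ⟨z, lt_of_le_of_ne hz.2 h, rfl⟩

include heN in
lemma cover_P1 {x : M} (h3 : x ∉ closure Nᶜ) (h2 : x ∉ P2 N U e) : x ∈ N \ Vh N U e := by
  rw [closure_compl, Set.mem_compl_iff, not_not] at h3
  refine ⟨interior_subset h3, fun hv => ?_⟩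
  obtain ⟨z, hz, rfl⟩ := hv
  have h0 : 0 ≤ (z.2 : ℝ) := (emap_mem_N_iff N U e heN z).mp (interior_subset h3)
  exact h2 ⟨z, ⟨h0, le_of_lt hz⟩, rfl⟩

include he0 in
lemma P1_not_P3 (hNc : IsClosed N) {x : M} (h1 : x ∈ N \ Vh N U e) :
    x ∉ closure Nᶜ := by
  intro hc
  have : x ∈ frontier N := by
    rw [frontier_eq_closure_inter_closure, hNc.closure_eq]
    exact ⟨h1.1, hc⟩
  exact h1.2 (fr_subset_Vh N U e he0 this)

lemma fr_compact (hK : IsCompact (closure Nᶜ)) : IsCompact (frontier N) := by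
  apply hK.of_isClosed_subset isClosed_frontier
  rw [closure_compl]
  exact fun x hx => hx.2

lemma P2_compact (hK : IsCompact (closure Nᶜ)) : IsCompact (P2 N U e) := by
  have hFr : CompactSpace (frontier N) :=
    isCompact_univ_iff.mp (Topology.IsEmbedding.subtypeVal.isCompact_iff.mpr
      (by simpa using fr_compact N hK))
  have hS : IsCompact {r : Set.Ioo (-1:ℝ) 1 | (r : ℝ) ∈ Set.Icc 0 (1/2)} := by
    rw [Topology.IsEmbedding.subtypeVal.isCompact_iff]
    have : Subtype.val '' {r : Set.Ioo (-1:ℝ) 1 | (r : ℝ) ∈ Set.Icc 0 (1/2)}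
        = Set.Icc (0:ℝ) (1/2) := by
      ext r
      constructor
      · rintro ⟨⟨r', hr'⟩, hm, rfl⟩; exact hm
      · rintro ⟨ha, hb⟩
        exact ⟨⟨r, ⟨by linarith, by linarith⟩⟩, ⟨ha, hb⟩, rfl⟩
    rw [this]
    exact isCompact_Icc
  have hT : IsCompact {z : frontier N × Set.Ioo (-1:ℝ) 1 | (z.2 : ℝ) ∈ Set.Icc 0 (1/2)} := by
    have : {z : frontier N × Set.Ioo (-1:ℝ) 1 | (z.2 : ℝ) ∈ Set.Icc 0 (1/2)}
        = Set.univ ×ˢ {r : Set.Ioo (-1:ℝ) 1 | (r : ℝ) ∈ Set.Icc 0 (1/2)} := by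
      ext z; simp
    rw [this]
    exact isCompact_univ.prod hS
  exact hT.image (continuous_subtype_val.comp e.continuous :
    Continuous fun z : frontier N × Set.Ioo (-1:ℝ) 1 => ((e z : M)))

lemma contOn_sig : ContinuousOn (sig N U e) U := by
  rw [continuousOn_iff_continuous_restrict]
  have : U.domRestrict (sig N U e) = fun u : U => ((e.symm u).2 : ℝ) := by
    funext u
    simp only [Set.domRestrict_apply, sig, dif_pos u.2, Subtype.coe_eta]
  rw [this]
  fun_prop

lemma contOn_cpt :
    ContinuousOn (fun p : M × ℝ => cpt N U e p.1 p.2) (U ×ˢ Set.Ioo (-1:ℝ) 1) := by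
  rw [continuousOn_iff_continuous_restrict]
  have : (U ×ˢ Set.Ioo (-1:ℝ) 1).domRestrict (fun p : M × ℝ => cpt N U e p.1 p.2) =
      fun q : ↥(U ×ˢ Set.Ioo (-1:ℝ) 1) =>
        (e ((e.symm ⟨q.val.1, q.2.1⟩).1, ⟨q.val.2, q.2.2⟩) : M) := by
    funext q
    simp only [Set.domRestrict_apply, cpt]
    rw [dif_pos ⟨q.2.1, q.2.2⟩]
  rw [this]
  fun_prop

lemma rr_mem (hm : 0 < m) {x : M} (hx : x ∈ P2 N U e) {u : ℝ} (hu : u ∈ Set.Icc (0:ℝ) 1)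
    (t : ℝ) : rr N U e m x t u ∈ Set.Icc (0:ℝ) (1/2) := by
  have hσ := sig_mem_P2 N U e hx
  have hb := bF_mem hu.1 hu.2
  have hτ := tauF_mem m hm t
  have hth1 : tauF m t / m ≤ 1 := (div_le_one hm).mpr hτ.2
  have hth0 : -1 ≤ tauF m t / m := by rw [le_div_iff₀ hm]; linarith [hτ.1]
  have hell : ellF (2 * sig N U e x) (tauF m t / m) ≤ 1 + 2 * sig N U e x :=
    ellF_le (by linarith [hσ.1]) (by linarith [hσ.2]) hth0 hth1
  have hmax1 : max (ellF (2 * sig N U e x) (tauF m t / m) - 1) 0 ≤ 1 :=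
    max_le (by linarith [hσ.2]) (by norm_num)
  have hmax0 : (0:ℝ) ≤ max (ellF (2 * sig N U e x) (tauF m t / m) - 1) 0 := le_max_right _ _
  constructor
  · have h1 : 0 ≤ (1 - bF u) * sig N U e x := mul_nonneg (by linarith [hb.2]) hσ.1
    have h2 : 0 ≤ bF u * max (ellF (2 * sig N U e x) (tauF m t / m) - 1) 0 / 2 :=
      div_nonneg (mul_nonneg hb.1 hmax0) (by norm_num)
    rw [rr]; linarith
  · have h1 : (1 - bF u) * sig N U e x ≤ (1 - bF u) * (1/2) :=
      mul_le_mul_of_nonneg_left hσ.2 (by linarith [hb.2])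
    have h2 : bF u * max (ellF (2 * sig N U e x) (tauF m t / m) - 1) 0 / 2 ≤ bF u * 1 / 2 := by
      apply div_le_div_of_nonneg_right ?_ (by norm_num)
      exact mul_le_mul_of_nonneg_left hmax1 hb.1
    rw [rr]; linarith

/-! ### agreement lemmas -/

include heN in
lemma agree32 (hUo : IsOpen U) (hm : 0 < m) {p : (M × ℝ) × ℝ}
    (h3 : p.1.1 ∈ closure Nᶜ) (h2 : p.1.1 ∈ P2 N U e) :
    phi3 m p = phi2 N U e m p := by
  have hσ : sig N U e p.1.1 = 0 := sig_eq_zero_of_mem N U e heN hUo h2 h3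
  have hU : p.1.1 ∈ U := P2_subset_U N U e h2
  have hτ := tauF_mem m hm p.1.2
  have hth1 : tauF m p.1.2 / m ≤ 1 := (div_le_one hm).mpr hτ.2
  have hell : ellF (2 * sig N U e p.1.1) (tauF m p.1.2 / m) = tauF m p.1.2 / m := by
    rw [hσ]; norm_num [ellF]
  have hrr : rr N U e m p.1.1 p.1.2 p.2 = 0 := by
    rw [rr, hell, hσ, max_eq_right (by linarith)]
    ring
  have hmin : min (ellF (2 * sig N U e p.1.1) (tauF m p.1.2 / m)) 1 = tauF m p.1.2 / m := by
    rw [hell]; exact min_eq_left hth1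
  have hmm : m * (tauF m p.1.2 / m) = tauF m p.1.2 := by field_simp
  apply Prod.ext
  · show p.1.1 = cpt N U e p.1.1 (rr N U e m p.1.1 p.1.2 p.2)
    rw [hrr, cpt_zero_self N U e hU hσ]
  · show (1 - aF p.2) * p.1.2 + aF p.2 * tauF m p.1.2 = _
    rw [phi2]
    simp only
    rw [hmin, hmm]
    ring

lemma agree12 (hm : 0 < m) {p : (M × ℝ) × ℝ}
    (h1 : p.1.1 ∈ N \ Vh N U e) (h2 : p.1.1 ∈ P2 N U e) :
    phi1 m p = phi2 N U e m p := by
  have hσ : sig N U e p.1.1 = 1/2 := sig_eq_half_of_not_Vh N U e h2 h1.2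
  have hU : p.1.1 ∈ U := P2_subset_U N U e h2
  have hell : ellF (2 * sig N U e p.1.1) (tauF m p.1.2 / m) = 2 := by
    rw [hσ]; norm_num [ellF]; ring
  have hrr : rr N U e m p.1.1 p.1.2 p.2 = sig N U e p.1.1 := by
    rw [rr, hell, hσ]
    norm_num
    ring
  have hmin : min (ellF (2 * sig N U e p.1.1) (tauF m p.1.2 / m)) 1 = 1 := by
    rw [hell]; norm_num
  apply Prod.ext
  · show p.1.1 = cpt N U e p.1.1 (rr N U e m p.1.1 p.1.2 p.2)
    rw [hrr, cpt_sig_self N U e hU]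
  · show (1 - aF p.2) * p.1.2 + aF p.2 * ((1 - bF p.2) * tauF m p.1.2 + bF p.2 * m) = _
    rw [phi2]
    simp only
    rw [hmin]
    ring

/-! ### value lemmas -/

include heN in
lemma fFull_zero (hm : 0 < m) (p : (M × ℝ) × ℝ) (hp : p.2 = 0) :
    fFull N U e m p = p.1 := by
  rw [fFull]
  split_ifs with h3 h2
  · apply Prod.ext
    · rfl
    · show (1 - aF p.2) * p.1.2 + aF p.2 * tauF m p.1.2 = p.1.2
      rw [hp, aF_zero]; ring
  · have hU : p.1.1 ∈ U := P2_subset_U N U e h2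
    have hrr : rr N U e m p.1.1 p.1.2 p.2 = sig N U e p.1.1 := by
      rw [rr, hp, bF_zero]; ring
    apply Prod.ext
    · show cpt N U e p.1.1 (rr N U e m p.1.1 p.1.2 p.2) = p.1.1
      rw [hrr, cpt_sig_self N U e hU]
    · show (1 - aF p.2) * p.1.2 + _ = p.1.2
      rw [hp, aF_zero]; ring
  · apply Prod.ext
    · rfl
    · show (1 - aF p.2) * p.1.2 + _ = p.1.2
      rw [hp, aF_zero]; ring

include heN he0 in
lemma fFull_one (hNc : IsClosed N) (hUo : IsOpen U) (hm : 0 < m) {x : M} {t : ℝ}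
    (hW : (x, t) ∈ (N ×ˢ (Set.univ : Set ℝ)) ∪
      ((Set.univ : Set M) ×ˢ (Set.Iic (-m) ∪ Set.Ici m))) :
    fFull N U e m ((x, t), 1) ∈ ((Set.univ ×ˢ ({m} : Set ℝ)) ∪
      (frontier N ×ˢ Set.Icc (-m) m)) ∪ (closure Nᶜ ×ˢ ({-m} : Set ℝ)) := by
  rw [fFull]
  split_ifs with h3 h2
  · simp only [phi3, aF_one]
    have harith : (1 - (1:ℝ)) * t + 1 * tauF m t = tauF m t := by ring
    rw [harith]
    rcases le_or_gt m t with h | h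
    · rw [tauF_of_ge m hm h]; exact Or.inl (Or.inl ⟨trivial, rfl⟩)
    rcases le_or_gt t (-m) with h' | h'
    · rw [tauF_of_le m hm h']; exact Or.inr ⟨h3, rfl⟩
    · have hxN : x ∈ N := by
        rcases hW with hl | hr
        · exact hl.1
        · rcases hr.2 with h1 | h1
          · exact absurd h1 (by simp; linarith)
          · exact absurd h1 (by simp; linarith)
      have hfr : x ∈ frontier N := by
        rw [frontier_eq_closure_inter_closure, hNc.closure_eq]
        exact ⟨hxN, h3⟩
      rw [tauF_of_mem m h'.le h.le]
      exact Or.inl (Or.inr ⟨hfr, ⟨h'.le, h.le⟩⟩)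
  · have hσ := sig_mem_P2 N U e h2
    have hU : x ∈ U := P2_subset_U N U e h2
    have hτ := tauF_mem m hm t
    have hth1 : tauF m t / m ≤ 1 := (div_le_one hm).mpr hτ.2
    have hth0 : -1 ≤ tauF m t / m := by rw [le_div_iff₀ hm]; linarith [hτ.1]
    simp only [phi2, aF_one, bF_one]
    set ℓ := ellF (2 * sig N U e x) (tauF m t / m) with hℓ
    have hrr : rr N U e m x t 1 = max (ℓ - 1) 0 / 2 := by
      rw [rr, bF_one, ← hℓ]; ring
    have hℓlo : -1 ≤ ℓ := le_trans hth0 (ellF_ge (by linarith [hσ.1]) hth1)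
    rcases le_or_gt 1 ℓ with h | h
    · have harith : (1 - (1:ℝ)) * t + 1 * ((1 - 1) * tauF m t + 1 * (m * min ℓ 1)) = m := by
        rw [min_eq_right h]; ring
      rw [harith]
      exact Or.inl (Or.inl ⟨trivial, rfl⟩)
    · have hmax : max (ℓ - 1) 0 = 0 := max_eq_right (by linarith)
      have harith : (1 - (1:ℝ)) * t + 1 * ((1 - 1) * tauF m t + 1 * (m * min ℓ 1)) = m * ℓ := by
        rw [min_eq_left h.le]; ring
      rw [harith, hrr, hmax]
      norm_num
      exact Or.inl (Or.inr ⟨cpt_zero_mem_fr N U e he0 hU,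
        ⟨by nlinarith, by nlinarith⟩⟩)
  · simp only [phi1, aF_one, bF_one]
    have harith : (1 - (1:ℝ)) * t + 1 * ((1 - 1) * tauF m t + 1 * m) = m := by ring
    rw [harith]
    exact Or.inl (Or.inl ⟨trivial, rfl⟩)

include heN he0 in
lemma fFull_fix (hNc : IsClosed N) (hm : 0 < m) {x : M} {t u : ℝ}
    (hspine : (x, t) ∈ ((Set.univ ×ˢ ({m} : Set ℝ)) ∪
      (frontier N ×ˢ Set.Icc (-m) m)) ∪ (closure Nᶜ ×ˢ ({-m} : Set ℝ))) :
    fFull N U e m ((x, t), u) = (x, t) := by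
  rcases hspine with (⟨-, ht⟩ | ⟨hfr, ht⟩) | ⟨hcl, ht⟩
  · -- t = m
    have ht' : t = m := ht
    rw [ht']
    have hτ : tauF m m = m := tauF_of_ge m hm le_rfl
    rw [fFull]
    split_ifs with h3 h2
    · apply Prod.ext
      · rfl
      · show (1 - aF u) * m + aF u * tauF m m = m
        rw [hτ]; ring
    · have hσ := sig_mem_P2 N U e h2
      have hU : x ∈ U := P2_subset_U N U e h2
      have hth : tauF m m / m = 1 := by rw [hτ]; field_simp
      have hell : ellF (2 * sig N U e x) (tauF m m / m) = 1 + 2 * sig N U e x := by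
        rw [hth]; norm_num [ellF]
      have hmin : min (ellF (2 * sig N U e x) (tauF m m / m)) 1 = 1 := by
        rw [hell]; exact min_eq_right (by linarith [hσ.1])
      have hrr : rr N U e m x m u = sig N U e x := by
        rw [rr, hell]
        rw [max_eq_left (by linarith [hσ.1] : (0:ℝ) ≤ 1 + 2 * sig N U e x - 1)]
        ring
      apply Prod.ext
      · show cpt N U e x (rr N U e m x m u) = x
        rw [hrr, cpt_sig_self N U e hU]
      · show (1 - aF u) * m + aF u * ((1 - bF u) * tauF m m +
            bF u * (m * min (ellF (2 * sig N U e x) (tauF m m / m)) 1)) = m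
        rw [hmin, hτ]; ring
    · apply Prod.ext
      · rfl
      · show (1 - aF u) * m + aF u * ((1 - bF u) * tauF m m + bF u * m) = m
        rw [hτ]; ring
  · -- x ∈ frontier N, t ∈ Icc
    have h3 : x ∈ closure Nᶜ := by
      rw [frontier_eq_closure_inter_closure] at hfr
      exact hfr.2
    rw [fFull, if_pos h3]
    apply Prod.ext
    · rfl
    · show (1 - aF u) * t + aF u * tauF m t = t
      rw [tauF_of_mem m ht.1 ht.2]; ring
  · -- x ∈ closure Nᶜ, t = -m
    have ht' : t = -m := ht
    rw [ht', fFull, if_pos hcl]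
    apply Prod.ext
    · rfl
    · show (1 - aF u) * (-m) + aF u * tauF m (-m) = -m
      rw [tauF_of_le m hm le_rfl]; ring

omit he0 in
include heN in
lemma fFull_mem_W (hNc : IsClosed N) (hm : 0 < m) {x : M} {t u : ℝ}
    (hu : u ∈ Set.Icc (0:ℝ) 1)
    (hW : (x, t) ∈ (N ×ˢ (Set.univ : Set ℝ)) ∪
      ((Set.univ : Set M) ×ˢ (Set.Iic (-m) ∪ Set.Ici m))) :
    fFull N U e m ((x, t), u) ∈ (N ×ˢ (Set.univ : Set ℝ)) ∪
      ((Set.univ : Set M) ×ˢ (Set.Iic (-m) ∪ Set.Ici m)) := by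
  have ha := aF_mem hu.1 hu.2
  rw [fFull]
  split_ifs with h3 h2
  · by_cases hxN : x ∈ N
    · exact Or.inl ⟨hxN, trivial⟩
    · refine Or.inr ⟨trivial, ?_⟩
      have hti : t ∈ Set.Iic (-m) ∪ Set.Ici m := by
        rcases hW with hl | hr
        · exact absurd hl.1 hxN
        · exact hr.2
      rcases hti with h | h
      · simp only [Set.mem_Iic] at h
        refine Or.inl ?_
        simp only [phi3, Set.mem_Iic]
        rw [tauF_of_le m hm h]
        nlinarith [ha.1, ha.2]
      · simp only [Set.mem_Ici] at h
        refine Or.inr ?_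
        simp only [phi3, Set.mem_Ici]
        rw [tauF_of_ge m hm h]
        nlinarith [ha.1, ha.2]
  · have hU : x ∈ U := P2_subset_U N U e h2
    have hr := rr_mem N U e m hm h2 hu t
    exact Or.inl ⟨cpt_mem_N N U e heN hU hr.1 (by linarith [hr.2]), trivial⟩
  · exact Or.inl ⟨(cover_P1 N U e heN h3 h2).1, trivial⟩

/-! ### continuity -/

lemma cont_aF : Continuous aF := by unfold aF; fun_prop
lemma cont_bF : Continuous bF := by unfold bF; fun_prop
lemma cont_tauF : Continuous (tauF m) := by unfold tauF; fun_prop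
lemma cont_phi3 : Continuous (phi3 m (M := M)) := by
  unfold phi3 aF tauF; fun_prop
lemma cont_phi1 : Continuous (phi1 m (M := M)) := by
  unfold phi1 aF bF tauF; fun_prop

lemma contOn_phi2 (hm : 0 < m) :
    ContinuousOn (phi2 N U e m)
      ({p : (M × ℝ) × ℝ | p.1.1 ∈ P2 N U e} ∩ {p | p.2 ∈ Set.Icc (0:ℝ) 1}) := by
  set Q := {p : (M × ℝ) × ℝ | p.1.1 ∈ P2 N U e} ∩ {p | p.2 ∈ Set.Icc (0:ℝ) 1} with hQ
  have hσc : ContinuousOn (fun p : (M × ℝ) × ℝ => sig N U e p.1.1) Q := by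
    apply (contOn_sig N U e).comp (by fun_prop : Continuous fun p : (M × ℝ) × ℝ => p.1.1).continuousOn
    exact fun p hp => P2_subset_U N U e hp.1
  have hτc : Continuous fun p : (M × ℝ) × ℝ => tauF m p.1.2 :=
    (cont_tauF m).comp (by fun_prop)
  have hthc : Continuous fun p : (M × ℝ) × ℝ => tauF m p.1.2 / m := hτc.div_const m
  have hac : Continuous fun p : (M × ℝ) × ℝ => aF p.2 := cont_aF.comp continuous_snd
  have hbc : Continuous fun p : (M × ℝ) × ℝ => bF p.2 := cont_bF.comp continuous_snd
  have hellc : ContinuousOn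
      (fun p : (M × ℝ) × ℝ => ellF (2 * sig N U e p.1.1) (tauF m p.1.2 / m)) Q := by
    unfold ellF
    apply ContinuousOn.add
    apply ContinuousOn.add hthc.continuousOn (continuousOn_const.mul hσc)
    exact ((continuousOn_const.mul hσc).pow 2).mul
      (continuousOn_const.sub hthc.continuousOn)
  have hrrc : ContinuousOn (fun p : (M × ℝ) × ℝ => rr N U e m p.1.1 p.1.2 p.2) Q := by
    unfold rr
    apply ContinuousOn.add
    · exact (continuousOn_const.sub hbc.continuousOn).mul hσc
    · have hmaxc : ContinuousOn (fun p : (M × ℝ) × ℝ =>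
          max (ellF (2 * sig N U e p.1.1) (tauF m p.1.2 / m) - 1) 0) Q :=
        continuous_max.comp_continuousOn
          ((hellc.sub continuousOn_const).prodMk continuousOn_const)
      exact (hbc.continuousOn.mul hmaxc).div_const 2
  apply ContinuousOn.prodMk
  · have hinner : ContinuousOn
        (fun p : (M × ℝ) × ℝ => (p.1.1, rr N U e m p.1.1 p.1.2 p.2)) Q :=
      (by fun_prop : Continuous fun p : (M × ℝ) × ℝ => p.1.1).continuousOn.prodMk hrrc
    have hmaps : Set.MapsTo (fun p : (M × ℝ) × ℝ => (p.1.1, rr N U e m p.1.1 p.1.2 p.2))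
        Q (U ×ˢ Set.Ioo (-1:ℝ) 1) := by
      intro p hp
      have hr := rr_mem N U e m hm hp.1 hp.2 p.1.2
      exact ⟨P2_subset_U N U e hp.1, ⟨by linarith [hr.1], by linarith [hr.2]⟩⟩
    exact (contOn_cpt N U e).comp hinner hmaps
  · apply ContinuousOn.add
    · exact (continuousOn_const.sub hac.continuousOn).mul (by fun_prop :
        Continuous fun p : (M × ℝ) × ℝ => p.1.2).continuousOn
    · apply hac.continuousOn.mul
      apply ContinuousOn.add
      · exact (continuousOn_const.sub hbc.continuousOn).mul hτc.continuousOn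
      · have hminc : ContinuousOn (fun p : (M × ℝ) × ℝ =>
            min (ellF (2 * sig N U e p.1.1) (tauF m p.1.2 / m)) 1) Q :=
          continuous_min.comp_continuousOn (hellc.prodMk continuousOn_const)
        exact hbc.continuousOn.mul (continuousOn_const.mul hminc)

include heN he0 in
lemma contOn_fFull [T2Space M] (hNc : IsClosed N) (hK : IsCompact (closure Nᶜ))
    (hUo : IsOpen U) (hm : 0 < m) :
    ContinuousOn (fFull N U e m) {p : (M × ℝ) × ℝ | p.2 ∈ Set.Icc (0:ℝ) 1} := by
  set S := {p : (M × ℝ) × ℝ | p.2 ∈ Set.Icc (0:ℝ) 1} with hS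
  have hScl : IsClosed S := isClosed_Icc.preimage continuous_snd
  set Q3 := {p : (M × ℝ) × ℝ | p.1.1 ∈ closure Nᶜ} ∩ S with hQ3
  set Q2 := {p : (M × ℝ) × ℝ | p.1.1 ∈ P2 N U e} ∩ S with hQ2
  set Q1 := {p : (M × ℝ) × ℝ | p.1.1 ∈ N \ Vh N U e} ∩ S with hQ1
  have hxc : Continuous fun p : (M × ℝ) × ℝ => p.1.1 := by fun_prop
  have hQ3c : IsClosed Q3 := (isClosed_closure.preimage hxc).inter hScl
  have hQ2c : IsClosed Q2 := (((P2_compact N U e hK).isClosed).preimage hxc).inter hScl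
  have hQ1c : IsClosed Q1 :=
    ((hNc.inter (Vh_open N U e hUo).isClosed_compl).preimage hxc).inter hScl
  have hA3 : ∀ p ∈ Q3, fFull N U e m p = phi3 m p := by
    intro p hp
    rw [fFull, if_pos (show p.1.1 ∈ closure Nᶜ from hp.1)]
  have hA2 : ∀ p ∈ Q2, fFull N U e m p = phi2 N U e m p := by
    intro p hp
    rw [fFull]
    by_cases h3 : p.1.1 ∈ closure Nᶜ
    · rw [if_pos h3]
      exact agree32 N U e m heN hUo hm h3 hp.1
    · rw [if_neg h3, if_pos (show p.1.1 ∈ P2 N U e from hp.1)]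
  have hA1 : ∀ p ∈ Q1, fFull N U e m p = phi1 m p := by
    intro p hp
    rw [fFull, if_neg (P1_not_P3 N U e he0 hNc hp.1)]
    by_cases h2 : p.1.1 ∈ P2 N U e
    · rw [if_pos h2]
      exact (agree12 N U e m hm hp.1 h2).symm
    · rw [if_neg h2]
  have hcover : S ⊆ Q3 ∪ Q2 ∪ Q1 := by
    intro p hp
    by_cases h3 : p.1.1 ∈ closure Nᶜ
    · exact Or.inl (Or.inl ⟨h3, hp⟩)
    by_cases h2 : p.1.1 ∈ P2 N U e
    · exact Or.inl (Or.inr ⟨h2, hp⟩)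
    · exact Or.inr ⟨cover_P1 N U e heN h3 h2, hp⟩
  intro z hz
  have c3 : ContinuousWithinAt (fFull N U e m) Q3 z := by
    by_cases hz3 : z ∈ Q3
    · exact ((cont_phi3 m).continuousAt.continuousWithinAt).congr hA3 (hA3 z hz3)
    · rw [← hQ3c.closure_eq] at hz3
      exact continuousWithinAt_of_notMem_closure hz3
  have c2 : ContinuousWithinAt (fFull N U e m) Q2 z := by
    by_cases hz2 : z ∈ Q2
    · exact ((contOn_phi2 N U e m hm) z hz2).congr hA2 (hA2 z hz2)
    · rw [← hQ2c.closure_eq] at hz2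
      exact continuousWithinAt_of_notMem_closure hz2
  have c1 : ContinuousWithinAt (fFull N U e m) Q1 z := by
    by_cases hz1 : z ∈ Q1
    · exact ((cont_phi1 m).continuousAt.continuousWithinAt).congr hA1 (hA1 z hz1)
    · rw [← hQ1c.closure_eq] at hz1
      exact continuousWithinAt_of_notMem_closure hz1
  exact ((c3.union c2).union c1).mono hcover

end WDRAux

theorem W_deformation_retract_onto_spine (n : ℕ) (M : Type) [TopologicalSpace M]
    (hM : IsOpenNManifold n M) (hMconn : ConnectedSpace M)
    (N : Set M) (hN : IsCleanNbhdOfInf N) (m : ℝ) (hm : 0 < m) :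
    ∃ F : C(↥(WSet N m) × I, ↥(WSet N m)),
      (∀ z, F (z, 0) = z) ∧
      (∀ z, (F (z, 1) : M × ℝ) ∈ ((Set.univ ×ˢ ({m} : Set ℝ)) ∪
        (frontier ((interior N)ᶜ) ×ˢ Set.Icc (-m) m) ∪
        (((interior N)ᶜ : Set M) ×ˢ ({-m} : Set ℝ)))) ∧
      (∀ z : ↥(WSet N m), (z : M × ℝ) ∈ ((Set.univ ×ˢ ({m} : Set ℝ)) ∪
        (frontier ((interior N)ᶜ) ×ˢ Set.Icc (-m) m) ∪
        (((interior N)ᶜ : Set M) ×ˢ ({-m} : Set ℝ))) →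
        ∀ t : I, F (z, t) = z) := by
  classical
  obtain ⟨hT2, -, -, -⟩ := hM
  haveI : T2Space M := hT2
  obtain ⟨hNc, hK, U, e, hUo, hFrU, he0, heN⟩ := hN
  have hfr_eq : frontier ((interior N)ᶜ) = frontier N :=
    WDRAux.fr_eq N U e heN he0 hUo hNc
  have hint_eq : ((interior N)ᶜ : Set M) = closure Nᶜ := closure_compl.symm
  have hcont : Continuous fun z : ↥(WSet N m) × I =>
      WDRAux.fFull N U e m ((z.1 : M × ℝ), (z.2 : ℝ)) := by
    apply (WDRAux.contOn_fFull N U e m heN he0 hNc hK hUo hm).comp_continuous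
    · fun_prop
    · exact fun z => ⟨z.2.2.1, z.2.2.2⟩
  have memW : ∀ z : ↥(WSet N m) × I,
      WDRAux.fFull N U e m ((z.1 : M × ℝ), (z.2 : ℝ)) ∈ WSet N m := by
    intro z
    have hz : ((z.1 : M × ℝ).1, (z.1 : M × ℝ).2) ∈ (N ×ˢ (Set.univ : Set ℝ)) ∪
        ((Set.univ : Set M) ×ˢ (Set.Iic (-m) ∪ Set.Ici m)) := by
      have := z.1.2
      simpa [WSet] using this
    have := WDRAux.fFull_mem_W N U e m heN hNc hm
      (u := (z.2 : ℝ)) ⟨z.2.2.1, z.2.2.2⟩ hz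
    simpa [WSet] using this
  refine ⟨⟨fun z => ⟨WDRAux.fFull N U e m ((z.1 : M × ℝ), (z.2 : ℝ)), memW z⟩,
      hcont.subtype_mk _⟩, ?_, ?_, ?_⟩
  · intro z
    apply Subtype.ext
    exact WDRAux.fFull_zero N U e m heN hm ((z : M × ℝ), ((0 : I) : ℝ)) (by norm_num)
  · intro z
    rw [hfr_eq, hint_eq]
    have hz : ((z : M × ℝ).1, (z : M × ℝ).2) ∈ (N ×ˢ (Set.univ : Set ℝ)) ∪
        ((Set.univ : Set M) ×ˢ (Set.Iic (-m) ∪ Set.Ici m)) := by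
      have := z.2
      simpa [WSet] using this
    have h1 : ((1 : I) : ℝ) = 1 := rfl
    have := WDRAux.fFull_one N U e m heN he0 hNc hUo hm hz
    simpa [h1] using this
  · intro z hz t
    rw [hfr_eq, hint_eq] at hz
    apply Subtype.ext
    have hz' : ((z : M × ℝ).1, (z : M × ℝ).2) ∈ ((Set.univ ×ˢ ({m} : Set ℝ)) ∪
        (frontier N ×ˢ Set.Icc (-m) m)) ∪ (closure Nᶜ ×ˢ ({-m} : Set ℝ)) := by
      simpa using hz
    exact WDRAux.fFull_fix N U e m heN he0 hNc hm (u := (t : ℝ)) hz'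

end
end

section
/- Let M be a connected open n-manifold; let k ≥ 1 and let P and Q be clean neighborhoods of infinity in M, each having exactly k connected components P¹,…,Pᵏ and Q¹,…,Qᵏ respectively, each component having noncompact closure and nonempty connected topological frontier, and with Qʲ ⊆ int(Pʲ) for every j. Let p ∈ ∂P¹, q ∈ ∂Q¹, let α be a path from p to q lying in the closure of P¹ ∖ Q¹, and let 0 < m < m′. Then the homomorphism λ : π₁(W(Q,m′),(q,0)) → π₁(W(P,m),(p,0)), defined as the inclusion-induced homomorphism followed by the change-of-basepoint isomorphism along the path α × {0}, is surjective. -/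
open scoped unitInterval
open CategoryTheory

noncomputable section

namespace LamSurj

variable {X : Type} [TopologicalSpace X]

/-- Convex combination inside the unit interval. -/
def mixI (s x y : I) : I :=
  ⟨(1 - (s : ℝ)) * x + s * y, by
    constructor
    · have h1 : (0:ℝ) ≤ 1 - s := by linarith [s.2.2]
      have := mul_nonneg h1 x.2.1
      have := mul_nonneg s.2.1 y.2.1
      linarith
    · nlinarith [s.2.1, s.2.2, x.2.1, x.2.2, y.2.1, y.2.2]⟩

lemma continuous_mixI_aux {f g : I → I} (hf : Continuous f) (hg : Continuous g) :
    Continuous fun st : I × I => mixI st.1 (f st.2) (g st.2) := by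
  apply Continuous.subtype_mk
  exact ((continuous_const.sub (continuous_subtype_val.comp continuous_fst)).mul
      (continuous_subtype_val.comp (hf.comp continuous_snd))).add
    ((continuous_subtype_val.comp continuous_fst).mul
      (continuous_subtype_val.comp (hg.comp continuous_snd)))

/-- Construct a path homotopy (rel endpoints) from an explicit formula. -/
lemma homotopic_mk {u v : X} (p q : Path u v) (F : I × I → X) (hF : Continuous F)
    (h0 : ∀ t, F (0, t) = p t) (h1 : ∀ t, F (1, t) = q t)
    (hs : ∀ s, F (s, 0) = u) (ht : ∀ s, F (s, 1) = v) : p.Homotopic q := by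
  refine ⟨⟨⟨⟨F, hF⟩, ?_, ?_⟩, ?_⟩⟩
  · exact h0
  · exact h1
  · rintro s x (rfl | hx)
    · simpa using (hs s).trans (by simp)
    · simp only [Set.mem_singleton_iff] at hx
      subst hx
      simpa using (ht s).trans (by simp)

/-- Two paths which are reparametrizations (by same-endpoint `I`-paths) of a common
continuous map are homotopic rel endpoints. -/
lemma homotopic_reparam {u v : X} {a b : I} (p q : Path u v) (f g : Path a b)
    (F : C(I, X)) (hp : ∀ t, p t = F (f t)) (hq : ∀ t, q t = F (g t)) :
    p.Homotopic q := by
  refine homotopic_mk p q (fun st => F (mixI st.1 (f st.2) (g st.2)))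
    (F.continuous.comp (continuous_mixI_aux f.continuous g.continuous)) ?_ ?_ ?_ ?_
  · intro t
    have : mixI 0 (f t) (g t) = f t := by
      ext; simp [mixI]
    simp only [this]
    exact (hp t).symm
  · intro t
    have : mixI 1 (f t) (g t) = g t := by
      ext; simp [mixI]
    simp only [this]
    exact (hq t).symm
  · intro s
    have h : mixI s (f 0) (g 0) = a := by
      ext
      simp only [mixI, f.source, g.source]
      ring
    show F (mixI s (f 0) (g 0)) = u
    rw [h, ← f.source, ← hp 0, p.source]
  · intro s
    have h : mixI s (f 1) (g 1) = b := by
      ext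
      simp only [mixI, f.target, g.target]
      ring
    show F (mixI s (f 1) (g 1)) = v
    rw [h, ← f.target, ← hp 1, p.target]

/-- The linear path in the unit interval. -/
def segI (a b : I) : Path a b where
  toFun t := mixI t a b
  continuous_toFun := by
    apply Continuous.subtype_mk
    exact ((continuous_const.sub continuous_subtype_val).mul continuous_const).add
      (continuous_subtype_val.mul continuous_const)
  source' := by ext; simp [mixI]
  target' := by ext; simp [mixI]

lemma segI_apply (a b t : I) : ((segI a b t : I) : ℝ) = (1 - (t:ℝ)) * a + t * b := rfl

lemma trans_mem {A : Set X} {x y z : X} {p : Path x y} {q : Path y z}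
    (hp : ∀ t, p t ∈ A) (hq : ∀ t, q t ∈ A) : ∀ t, (p.trans q) t ∈ A := by
  intro t
  rw [Path.trans_apply]
  split <;> [apply hp; apply hq]

lemma symm_mem {A : Set X} {x y : X} {p : Path x y}
    (hp : ∀ t, p t ∈ A) : ∀ t, (p.symm) t ∈ A := fun t => hp _

end LamSurj

namespace LamSurj

variable {X : Type} [TopologicalSpace X]

/-- The homotopy class of a path, as a morphism in the fundamental groupoid. -/
def hcl {x y : X} (p : Path x y) :
    FundamentalGroupoid.mk x ⟶ FundamentalGroupoid.mk y := ⟦p⟧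

lemma hcl_trans {x y z : X} (p : Path x y) (q : Path y z) :
    hcl (p.trans q) = hcl p ≫ hcl q := rfl

lemma hcl_inv {x y : X} (p : Path x y) :
    Groupoid.inv (hcl p) = hcl p.symm := rfl

lemma hcl_eq_iff {x y : X} {p q : Path x y} : hcl p = hcl q ↔ p.Homotopic q := by
  constructor
  · intro h; exact Quotient.exact h
  · intro h; exact Quotient.sound h

lemma homotopic_of_hcl_eq {x y : X} {p q : Path x y} (h : hcl p = hcl q) : p.Homotopic q :=
  hcl_eq_iff.mp h

/-- Lift a path into a subset, as a path in the subtype. -/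
def liftPath {Z : Type} [TopologicalSpace Z] {S : Set Z} {z w : Z} (γ : Path z w)
    (h : ∀ t, γ t ∈ S) (hz : z ∈ S) (hw : w ∈ S) : Path (⟨z, hz⟩ : S) ⟨w, hw⟩ where
  toFun t := ⟨γ t, h t⟩
  continuous_toFun := γ.continuous.subtype_mk _
  source' := Subtype.ext γ.source
  target' := Subtype.ext γ.target

@[simp] lemma liftPath_apply {Z : Type} [TopologicalSpace Z] {S : Set Z} {z w : Z}
    (γ : Path z w) (h : ∀ t, γ t ∈ S) (hz : z ∈ S) (hw : w ∈ S) (t : I) :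
    liftPath γ h hz hw t = ⟨γ t, h t⟩ := rfl

lemma mix_mem_uIcc (a b : ℝ) (t : I) : (1 - (t:ℝ)) * a + t * b ∈ Set.uIcc a b := by
  constructor
  · nlinarith [mul_le_mul_of_nonneg_left (min_le_left a b) (sub_nonneg.2 t.2.2),
      mul_le_mul_of_nonneg_left (min_le_right a b) t.2.1, t.2.1, t.2.2]
  · nlinarith [mul_le_mul_of_nonneg_left (le_max_left a b) (sub_nonneg.2 t.2.2),
      mul_le_mul_of_nonneg_left (le_max_right a b) t.2.1, t.2.1, t.2.2]

/-- A vertical (linear) path in a subset of `Y × ℝ`. -/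
def vpath {Y : Type} [TopologicalSpace Y] {S : Set (Y × ℝ)} (x : Y) (a b : ℝ)
    (h : ∀ r ∈ Set.uIcc a b, (x, r) ∈ S) :
    Path (⟨(x, a), h a Set.left_mem_uIcc⟩ : S) ⟨(x, b), h b Set.right_mem_uIcc⟩ where
  toFun t := ⟨(x, (1 - (t:ℝ)) * a + t * b), h _ (mix_mem_uIcc a b t)⟩
  continuous_toFun := by
    apply Continuous.subtype_mk
    exact continuous_const.prodMk
      (((continuous_const.sub continuous_subtype_val).mul continuous_const).add
        (continuous_subtype_val.mul continuous_const))
  source' := Subtype.ext (by norm_num)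
  target' := Subtype.ext (by norm_num)

@[simp] lemma vpath_apply {Y : Type} [TopologicalSpace Y] {S : Set (Y × ℝ)} (x : Y) (a b : ℝ)
    (h : ∀ r ∈ Set.uIcc a b, (x, r) ∈ S) (t : I) :
    (vpath x a b h t : Y × ℝ) = (x, (1 - (t:ℝ)) * a + t * b) := rfl

/-- A horizontal path at a constant height in a subset of `Y × ℝ`. -/
def hpath {Y : Type} [TopologicalSpace Y] {S : Set (Y × ℝ)} {x y : Y} (θ : Path x y) (c : ℝ)
    (h : ∀ t, (θ t, c) ∈ S) (hx : (x, c) ∈ S) (hy : (y, c) ∈ S) :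
    Path (⟨(x, c), hx⟩ : S) ⟨(y, c), hy⟩ where
  toFun t := ⟨(θ t, c), h t⟩
  continuous_toFun := (θ.continuous.prodMk continuous_const).subtype_mk _
  source' := Subtype.ext (by simp)
  target' := Subtype.ext (by simp)

@[simp] lemma hpath_apply {Y : Type} [TopologicalSpace Y] {S : Set (Y × ℝ)} {x y : Y}
    (θ : Path x y) (c : ℝ) (h : ∀ t, (θ t, c) ∈ S) (hx : (x, c) ∈ S) (hy : (y, c) ∈ S) (t : I) :
    (hpath θ c h hx hy t : Y × ℝ) = (θ t, c) := rfl

/-- Vertically-supported paths over a common base point, with heights in a common convex set,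
are homotopic rel endpoints. -/
lemma vert_homotopic {Y : Type} [TopologicalSpace Y] {S : Set (Y × ℝ)} {u v : ↥S} (x : Y)
    {J : Set ℝ} (hJ : Convex ℝ J) (hXJ : ∀ r ∈ J, (x, r) ∈ S)
    (p q : Path u v)
    (hp1 : ∀ t, ((p t : Y × ℝ)).1 = x) (hq1 : ∀ t, ((q t : Y × ℝ)).1 = x)
    (hpJ : ∀ t, ((p t : Y × ℝ)).2 ∈ J) (hqJ : ∀ t, ((q t : Y × ℝ)).2 ∈ J) :
    p.Homotopic q := by
  have hmem : ∀ st : I × I,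
      (x, (1 - (st.1:ℝ)) * (p st.2 : Y × ℝ).2 + st.1 * (q st.2 : Y × ℝ).2) ∈ S := by
    intro st
    apply hXJ
    have := hJ (hpJ st.2) (hqJ st.2) (show (0:ℝ) ≤ 1 - st.1 by linarith [st.1.2.2])
      st.1.2.1 (by ring)
    simpa [smul_eq_mul] using this
  apply homotopic_mk p q (fun st => ⟨_, hmem st⟩)
  · apply Continuous.subtype_mk
    apply Continuous.prodMk continuous_const
    exact ((continuous_const.sub (continuous_subtype_val.comp continuous_fst)).mul
        (continuous_snd.comp (continuous_subtype_val.comp (p.continuous.comp continuous_snd)))).add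
      ((continuous_subtype_val.comp continuous_fst).mul
        (continuous_snd.comp (continuous_subtype_val.comp (q.continuous.comp continuous_snd))))
  · intro t
    apply Subtype.ext
    refine Prod.ext (hp1 t).symm ?_
    show (1 - (0:ℝ)) * (p t : Y × ℝ).2 + 0 * _ = (p t : Y × ℝ).2
    ring
  · intro t
    apply Subtype.ext
    refine Prod.ext (hq1 t).symm ?_
    show (1 - (1:ℝ)) * _ + 1 * (q t : Y × ℝ).2 = (q t : Y × ℝ).2
    ring
  · intro s
    apply Subtype.ext
    refine Prod.ext ?_ ?_
    · have := hp1 0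
      rw [p.source] at this
      exact this.symm
    · show (1 - (s:ℝ)) * (p 0 : Y × ℝ).2 + s * (q 0 : Y × ℝ).2 = (u : Y × ℝ).2
      rw [p.source, q.source]; ring
  · intro s
    apply Subtype.ext
    refine Prod.ext ?_ ?_
    · have := hp1 1
      rw [p.target] at this
      exact this.symm
    · show (1 - (s:ℝ)) * (p 1 : Y × ℝ).2 + s * (q 1 : Y × ℝ).2 = (v : Y × ℝ).2
      rw [p.target, q.target]; ring

end LamSurj

namespace LamSurj
variable {X : Type} [TopologicalSpace X]

def trackOf {W : Set X} (D : C(↥W × I, X)) (hD0 : ∀ w : ↥W, D (w, 0) = (w : X)) (w : ↥W) :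
    Path (w : X) (D (w, 1)) where
  toFun s := D (w, s)
  continuous_toFun := D.continuous.comp (continuous_const.prodMk continuous_id)
  source' := hD0 w
  target' := rfl

def timeOne {W : Set X} (D : C(↥W × I, X)) : C(↥W, X) :=
  ⟨fun v => D (v, 1), D.continuous.comp (continuous_id.prodMk continuous_const)⟩

lemma track_natural {W : Set X} (D : C(↥W × I, X)) (hD0 : ∀ w : ↥W, D (w, 0) = (w : X))
    {w w' : ↥W} (σt : Path w w') :
    hcl (σt.map continuous_subtype_val) =
      hcl (trackOf D hD0 w) ≫ hcl (σt.map (timeOne D).continuous) ≫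
        Groupoid.inv (hcl (trackOf D hD0 w')) := by
  let f : C(↥W, X) := ⟨Subtype.val, continuous_subtype_val⟩
  let H : ContinuousMap.Homotopy f (timeOne D) :=
    { toFun := fun p => D (p.2, p.1)
      continuous_toFun := D.continuous.comp (continuous_snd.prodMk continuous_fst)
      map_zero_left := fun v => hD0 v
      map_one_left := fun v => rfl }
  have key := H.eq_diag_path (X := TopCat.of ↥W) (Y := TopCat.of X) (x₀ := w) (x₁ := w')
    (⟦σt⟧ : FundamentalGroupoid.mk w ⟶ FundamentalGroupoid.mk w')
  have nat : hcl (σt.map continuous_subtype_val) ≫ hcl (trackOf D hD0 w') =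
      hcl (trackOf D hD0 w) ≫ hcl (σt.map (timeOne D).continuous) :=
    key.1.trans key.2.symm
  have : hcl (σt.map continuous_subtype_val) =
      (hcl (σt.map continuous_subtype_val) ≫ hcl (trackOf D hD0 w')) ≫
        Groupoid.inv (hcl (trackOf D hD0 w')) := by
    rw [Category.assoc, Groupoid.comp_inv, Category.comp_id]
  rw [this, nat]; exact Category.assoc _ _ _


lemma seg_good {A W : Set X} {x₀ : X}
    (D : C(↥W × I, X)) (hD0 : ∀ w : ↥W, D (w, 0) = (w : X)) (hD1 : ∀ w, D (w, 1) ∈ A)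
    (δ : ∀ z : X, Path x₀ z)
    (hδ : ∀ w : ↥W, ∃ η : Path x₀ (D (w, 1)), (∀ t, η t ∈ A) ∧
      ((δ (w : X)).trans (trackOf D hD0 w)).Homotopic η)
    {z z' : X} (hz : z ∈ W) (hz' : z' ∈ W) (sp : Path z z') (hsp : ∀ t, sp t ∈ W) :
    ∃ a : Path x₀ x₀, (∀ t, a t ∈ A) ∧ ((δ z).trans (sp.trans (δ z').symm)).Homotopic a := by
  obtain ⟨η, hηA, hη⟩ := hδ ⟨z, hz⟩
  obtain ⟨η', hη'A, hη'⟩ := hδ ⟨z', hz'⟩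
  let spt : Path (⟨z, hz⟩ : ↥W) ⟨z', hz'⟩ := liftPath sp hsp hz hz'
  let mid : Path (D (⟨z, hz⟩, 1)) (D (⟨z', hz'⟩, 1)) := spt.map (timeOne D).continuous
  refine ⟨η.trans (mid.trans η'.symm),
    trans_mem hηA (trans_mem (fun t => hD1 (spt t)) (symm_mem hη'A)), ?_⟩
  apply homotopic_of_hcl_eq
  have esp : sp = spt.map continuous_subtype_val := by
    ext t
    rfl
  have hnat := track_natural D hD0 spt
  rw [← esp] at hnat
  have ehη : hcl (δ z) ≫ hcl (trackOf D hD0 ⟨z, hz⟩) = hcl η := by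
    rw [← hcl_trans]; exact hcl_eq_iff.mpr hη
  have ehη' : hcl (δ z') ≫ hcl (trackOf D hD0 ⟨z', hz'⟩) = hcl η' := by
    rw [← hcl_trans]; exact hcl_eq_iff.mpr hη'
  have einv : Groupoid.inv (hcl η') =
      Groupoid.inv (hcl (trackOf D hD0 ⟨z', hz'⟩)) ≫ Groupoid.inv (hcl (δ z')) := by
    rw [← ehη']
    simp [Groupoid.inv_eq_inv]
  calc hcl ((δ z).trans (sp.trans (δ z').symm))
      = hcl (δ z) ≫ hcl sp ≫ Groupoid.inv (hcl (δ z')) := by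
        rw [hcl_trans, hcl_trans, hcl_inv]
    _ = hcl (δ z) ≫ (hcl (trackOf D hD0 ⟨z, hz⟩) ≫ hcl mid ≫
          Groupoid.inv (hcl (trackOf D hD0 ⟨z', hz'⟩))) ≫ Groupoid.inv (hcl (δ z')) := by
        rw [hnat]; rfl
    _ = (hcl (δ z) ≫ hcl (trackOf D hD0 ⟨z, hz⟩)) ≫ hcl mid ≫
          (Groupoid.inv (hcl (trackOf D hD0 ⟨z', hz'⟩)) ≫ Groupoid.inv (hcl (δ z'))) := by
        simp only [Category.assoc]
    _ = hcl η ≫ hcl mid ≫ Groupoid.inv (hcl η') := by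
        rw [ehη, einv]
    _ = hcl (η.trans (mid.trans η'.symm)) := by
        rw [hcl_trans, hcl_trans, hcl_inv]


lemma segI_mem_Icc {a b : I} (hab : a ≤ b) (u : I) : segI a b u ∈ Set.Icc a b := by
  have h := mix_mem_uIcc (a : ℝ) (b : ℝ) u
  rw [Set.uIcc_of_le (Subtype.coe_le_coe.mpr hab)] at h
  exact ⟨Subtype.coe_le_coe.mp h.1, Subtype.coe_le_coe.mp h.2⟩

lemma fin_aux {x₀ : X} (γ : Path x₀ x₀) (δ : ∀ z : X, Path x₀ z) {w : X} (e : x₀ = w)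
    (c : Path x₀ w) (hc : ∀ u, c u = γ u) {A : Set X} (hδA : ∀ s, δ x₀ s ∈ A)
    {η : Path x₀ x₀} (hηA : ∀ s, η s ∈ A) (hη : (c.trans (δ w).symm).Homotopic η) :
    ∃ η' : Path x₀ x₀, (∀ s, η' s ∈ A) ∧ γ.Homotopic η' := by
  subst e
  refine ⟨η.trans (δ x₀), trans_mem hηA hδA, ?_⟩
  have ec : c = γ := by ext u; exact hc u
  have hclη : hcl c ≫ Groupoid.inv (hcl (δ x₀)) = hcl η := by
    rw [hcl_inv, ← hcl_trans]
    exact hcl_eq_iff.mpr hη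
  apply homotopic_of_hcl_eq
  calc hcl γ = hcl c := by rw [ec]
    _ = (hcl c ≫ Groupoid.inv (hcl (δ x₀))) ≫ hcl (δ x₀) := by
        rw [Category.assoc, Groupoid.inv_comp, Category.comp_id]
    _ = hcl η ≫ hcl (δ x₀) := by rw [hclη]
    _ = hcl (η.trans (δ x₀)) := (hcl_trans _ _).symm

lemma core {A U V : Set X} (hUo : IsOpen U) (hVo : IsOpen V) (hUV : U ∪ V = Set.univ)
    {x₀ : X} (hx₀A : x₀ ∈ A)
    (DU : C(↥U × I, X)) (hDU0 : ∀ w : ↥U, DU (w, 0) = (w : X)) (hDU1 : ∀ w, DU (w, 1) ∈ A)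
    (DV : C(↥V × I, X)) (hDV0 : ∀ w : ↥V, DV (w, 0) = (w : X)) (hDV1 : ∀ w, DV (w, 1) ∈ A)
    (δ : ∀ z : X, Path x₀ z)
    (hδA : ∀ s, δ x₀ s ∈ A)
    (hδU : ∀ w : ↥U, ∃ η : Path x₀ (DU (w, 1)), (∀ s, η s ∈ A) ∧
      ((δ (w : X)).trans (trackOf DU hDU0 w)).Homotopic η)
    (hδV : ∀ w : ↥V, ∃ η : Path x₀ (DV (w, 1)), (∀ s, η s ∈ A) ∧
      ((δ (w : X)).trans (trackOf DV hDV0 w)).Homotopic η)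
    (γ : Path x₀ x₀) :
    ∃ η : Path x₀ x₀, (∀ s, η s ∈ A) ∧ γ.Homotopic η := by
  classical
  -- subdivide
  let c : Bool → Set I := fun b => if b then (⇑γ) ⁻¹' U else (⇑γ) ⁻¹' V
  have hco : ∀ b, IsOpen (c b) := by
    intro b
    cases b <;> simp only [c, if_true, if_false] <;>
      [exact hVo.preimage γ.continuous; exact hUo.preimage γ.continuous]
  have hcov : (Set.univ : Set I) ⊆ ⋃ b, c b := by
    intro u _
    have : γ u ∈ U ∪ V := by rw [hUV]; trivial
    rcases this with h | h
    · exact Set.mem_iUnion.mpr ⟨true, by simpa [c] using h⟩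
    · exact Set.mem_iUnion.mpr ⟨false, by simpa [c] using h⟩
  obtain ⟨t, ht0, htmono, ⟨n₀, hn₀⟩, hseg⟩ :=
    exists_monotone_Icc_subset_open_cover_unitInterval hco hcov
  -- partial paths
  let cpath : ∀ i : ℕ, Path x₀ (γ (t i)) := fun i =>
    ((segI 0 (t i)).map γ.continuous).cast γ.source.symm rfl
  have cpath_apply : ∀ i u, cpath i u = γ (segI 0 (t i) u) := fun i u => rfl
  have claim : ∀ i : ℕ, ∃ η : Path x₀ x₀, (∀ s, η s ∈ A) ∧
      ((cpath i).trans (δ (γ (t i))).symm).Homotopic η := by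
    intro i
    induction i with
    | zero =>
      have e : γ (t 0) = x₀ := by rw [ht0]; exact γ.source
      have hc : ∀ u, cpath 0 u = x₀ := by
        intro u
        rw [cpath_apply]
        have : segI 0 (t 0) u = 0 := by
          apply Subtype.ext
          rw [ht0]
          show (1 - (u:ℝ)) * ((0 : I) : ℝ) + u * ((0 : I) : ℝ) = ((0 : I) : ℝ)
          norm_num
        rw [this, γ.source]
      have hmem : ∀ s : I, δ (γ (t 0)) s ∈ A := by rw [e]; exact hδA
      exact ⟨(cpath 0).trans (δ (γ (t 0))).symm,
        trans_mem (fun u => by rw [hc u]; exact hx₀A) (symm_mem hmem), Path.Homotopic.refl _⟩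
    | succ i IH =>
      obtain ⟨η, hηA, hη⟩ := IH
      obtain ⟨b, hb⟩ := hseg i
      let sp : Path (γ (t i)) (γ (t (i + 1))) := (segI (t i) (t (i + 1))).map γ.continuous
      have hparam : ∀ u, segI (t i) (t (i + 1)) u ∈ c b :=
        fun u => hb (segI_mem_Icc (htmono (Nat.le_succ i)) u)
      have key : ∃ a : Path x₀ x₀, (∀ s, a s ∈ A) ∧
          ((δ (γ (t i))).trans (sp.trans (δ (γ (t (i + 1)))).symm)).Homotopic a := by
        cases b
        · have hmem' : ∀ u, sp u ∈ V := by
            intro u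
            have h := hparam u
            simp only [c, Bool.false_eq_true, if_false] at h
            exact h
          have hz : γ (t i) ∈ V := by have h0 := hmem' 0; rwa [Path.source] at h0
          have hz' : γ (t (i + 1)) ∈ V := by have h1 := hmem' 1; rwa [Path.target] at h1
          exact seg_good DV hDV0 hDV1 δ hδV hz hz' sp hmem'
        · have hmem' : ∀ u, sp u ∈ U := by
            intro u
            have h := hparam u
            simp only [c, if_true] at h
            exact h
          have hz : γ (t i) ∈ U := by have h0 := hmem' 0; rwa [Path.source] at h0
          have hz' : γ (t (i + 1)) ∈ U := by have h1 := hmem' 1; rwa [Path.target] at h1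
          exact seg_good DU hDU0 hDU1 δ hδU hz hz' sp hmem'
      obtain ⟨a, haA, ha⟩ := key
      refine ⟨η.trans a, trans_mem hηA haA, ?_⟩
      apply homotopic_of_hcl_eq
      have hsplit : (cpath (i + 1)).Homotopic ((cpath i).trans sp) := by
        apply homotopic_reparam (cpath (i + 1)) ((cpath i).trans sp)
          (segI 0 (t (i + 1))) ((segI 0 (t i)).trans (segI (t i) (t (i + 1))))
          γ.toContinuousMap
        · intro u
          rw [cpath_apply]
          rfl
        · intro u
          rw [Path.trans_apply, Path.trans_apply]
          split
          · rw [cpath_apply]; rfl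
          · rfl
      have ihcl : hcl (cpath i) ≫ Groupoid.inv (hcl (δ (γ (t i)))) = hcl η := by
        rw [hcl_inv, ← hcl_trans]
        exact hcl_eq_iff.mpr hη
      have hacl : hcl (δ (γ (t i))) ≫ hcl sp ≫ Groupoid.inv (hcl (δ (γ (t (i + 1))))) = hcl a := by
        rw [hcl_inv, ← hcl_trans, ← hcl_trans]
        exact hcl_eq_iff.mpr ha
      calc hcl ((cpath (i + 1)).trans (δ (γ (t (i + 1)))).symm)
          = hcl (cpath (i + 1)) ≫ Groupoid.inv (hcl (δ (γ (t (i + 1))))) := by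
            rw [hcl_trans, hcl_inv]
        _ = (hcl (cpath i) ≫ hcl sp) ≫ Groupoid.inv (hcl (δ (γ (t (i + 1))))) := by
            rw [← hcl_trans, hcl_eq_iff.mpr hsplit]
        _ = hcl (cpath i) ≫ (Groupoid.inv (hcl (δ (γ (t i)))) ≫ hcl (δ (γ (t i)))) ≫
              hcl sp ≫ Groupoid.inv (hcl (δ (γ (t (i + 1))))) := by
            rw [Groupoid.inv_comp, Category.id_comp, Category.assoc]
        _ = (hcl (cpath i) ≫ Groupoid.inv (hcl (δ (γ (t i))))) ≫
              (hcl (δ (γ (t i))) ≫ hcl sp ≫ Groupoid.inv (hcl (δ (γ (t (i + 1)))))) := by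
            simp only [Category.assoc]
        _ = hcl η ≫ hcl a := by rw [ihcl, hacl]
        _ = hcl (η.trans a) := (hcl_trans _ _).symm
  obtain ⟨η, hηA, hη⟩ := claim n₀
  have e : γ (t n₀) = x₀ := by rw [hn₀ n₀ le_rfl]; exact γ.target
  have hc : ∀ u, cpath n₀ u = γ u := by
    intro u
    rw [cpath_apply]
    congr 1
    apply Subtype.ext
    have h1 : ((t n₀ : I) : ℝ) = 1 := by rw [hn₀ n₀ le_rfl]; rfl
    show (1 - (u:ℝ)) * ((0 : I) : ℝ) + u * ((t n₀ : I) : ℝ) = (u : ℝ)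
    rw [h1]
    norm_num
  exact fin_aux γ δ e.symm (cpath n₀) hc hδA hηA hη


lemma glue_surj {Z : Type} [TopologicalSpace Z] {S T : Set Z} (hST : S ⊆ T) (x₀ : ↥S)
    (h : ∀ γ : Path (Set.inclusion hST x₀) (Set.inclusion hST x₀),
      ∃ η : Path (Set.inclusion hST x₀) (Set.inclusion hST x₀),
        (∀ s, ((η s : ↥T) : Z) ∈ S) ∧ γ.Homotopic η) :
    Function.Surjective (indHom (inclCM hST) x₀) := by
  intro g
  obtain ⟨γ, hγ⟩ := Quotient.exists_rep (FundamentalGroup.toPath (X := TopCat.of ↥T) g)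
  obtain ⟨η, hηS, hη⟩ := h γ
  let ηS : Path x₀ x₀ :=
    liftPath (η.map continuous_subtype_val) (fun s => hηS s) x₀.2 x₀.2
  refine ⟨FundamentalGroup.fromPath (X := TopCat.of ↥S) ⟦ηS⟧, ?_⟩
  show (FundamentalGroupoid.fundamentalGroupoidFunctor.map
      (X := TopCat.of ↥S) (Y := TopCat.of ↥T) (TopCat.ofHom (inclCM hST))).map (⟦ηS⟧ :
        FundamentalGroupoid.mk x₀ ⟶ FundamentalGroupoid.mk x₀) = g
  have e1 : (FundamentalGroupoid.fundamentalGroupoidFunctor.map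
      (X := TopCat.of ↥S) (Y := TopCat.of ↥T) (TopCat.ofHom (inclCM hST))).map (⟦ηS⟧ :
        FundamentalGroupoid.mk x₀ ⟶ FundamentalGroupoid.mk x₀) =
      ⟦ηS.map (inclCM hST).continuous⟧ := rfl
  have e2 : ηS.map (inclCM hST).continuous = η := by
    ext s
    rfl
  rw [e1, e2]
  exact (Quotient.sound hη.symm).trans hγ


/-- If `A × B` is locally path-connected and `B` is nonempty, then `A` is locally
path-connected. -/
lemma locPathConnectedSpace_fst {A B : Type} [TopologicalSpace A] [TopologicalSpace B]
    [Nonempty B] [LocallyPathConnectedSpace (A × B)] : LocallyPathConnectedSpace A := by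
  rw [locallyPathConnectedSpace_iff_pathComponentIn_mem_nhds]
  intro a u hu hau
  obtain ⟨b⟩ := ‹Nonempty B›
  have h1 : (a, b) ∈ u ×ˢ (Set.univ : Set B) := ⟨hau, trivial⟩
  have h2 : IsOpen (u ×ˢ (Set.univ : Set B)) := hu.prod isOpen_univ
  have hpc := isPathConnected_pathComponentIn h1
  have hopen : IsOpen (pathComponentIn (u ×ˢ (Set.univ : Set B)) (a, b)) :=
    h2.pathComponentIn _
  have himg : IsPathConnected (Prod.fst '' pathComponentIn (u ×ˢ (Set.univ : Set B)) (a, b)) :=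
    hpc.image continuous_fst
  have hsub : Prod.fst '' pathComponentIn (u ×ˢ (Set.univ : Set B)) (a, b) ⊆ u := by
    rintro _ ⟨p, hp, rfl⟩
    exact (pathComponentIn_subset hp).1
  have hmem : a ∈ Prod.fst '' pathComponentIn (u ×ˢ (Set.univ : Set B)) (a, b) :=
    ⟨(a, b), mem_pathComponentIn_self h1, rfl⟩
  exact Filter.mem_of_superset ((isOpenMap_fst _ hopen).mem_nhds hmem)
    (himg.subset_pathComponentIn hmem hsub)

/-- A path-connected subset of the ambient space contained in `P` pulls back to a
path-connected subset of the subtype `↥P`. -/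
lemma isPathConnected_preimage_val {Z : Type} [TopologicalSpace Z] {P s : Set Z}
    (hsP : s ⊆ P) (hs : IsPathConnected s) :
    IsPathConnected (Subtype.val ⁻¹' s : Set ↥P) := by
  obtain ⟨z, hz, hjoin⟩ := hs
  refine ⟨⟨z, hsP hz⟩, hz, ?_⟩
  rintro ⟨y, hyP⟩ hy
  obtain ⟨γ, hγ⟩ := hjoin hy
  exact ⟨liftPath γ (fun t => hsP (hγ t)) (hsP hz) hyP, fun t => hγ t⟩

/-- A space in which every point has an open neighborhood homeomorphic to `ℝⁿ` is locally
path-connected. -/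
lemma lpc_of_charts {n : ℕ} {M : Type} [TopologicalSpace M]
    (hch : ∀ x : M, ∃ U : Set M, IsOpen U ∧ x ∈ U ∧ Nonempty (U ≃ₜ (Fin n → ℝ))) :
    LocallyPathConnectedSpace M := by
  rw [locallyPathConnectedSpace_iff_pathComponentIn_mem_nhds]
  intro x u hu hxu
  obtain ⟨U, hUo, hxU, ⟨e⟩⟩ := hch x
  haveI : LocallyPathConnectedSpace ↥U := e.symm.isQuotientMap.locallyPathConnectedSpace
  have hxw : (⟨x, hxU⟩ : ↥U) ∈ (Subtype.val ⁻¹' u : Set ↥U) := hxu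
  set w : Set ↥U := pathComponentIn (Subtype.val ⁻¹' u) (⟨x, hxU⟩ : ↥U) with hw
  have hwo : IsOpen w := (hu.preimage continuous_subtype_val).pathComponentIn _
  have hxmemw : (⟨x, hxU⟩ : ↥U) ∈ w := mem_pathComponentIn_self hxw
  have himg : IsPathConnected (Subtype.val '' w) :=
    (isPathConnected_pathComponentIn hxw).image continuous_subtype_val
  have hsub : Subtype.val '' w ⊆ u := by
    rintro _ ⟨p, hp, rfl⟩
    exact pathComponentIn_subset (F := (Subtype.val ⁻¹' u : Set ↥U)) hp
  have hxmem : x ∈ Subtype.val '' w := ⟨⟨x, hxU⟩, hxmemw, rfl⟩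
  refine Filter.mem_of_superset
    ((hUo.isOpenEmbedding_subtypeVal.isOpenMap _ hwo).mem_nhds hxmem)
    (himg.subset_pathComponentIn hxmem hsub)


lemma pc_prod {A B : Type} [TopologicalSpace A] [TopologicalSpace B] {s : Set A} {t : Set B}
    (hs : IsPathConnected s) (ht : IsPathConnected t) : IsPathConnected (s ×ˢ t) := by
  obtain ⟨a, ha, hja⟩ := hs
  obtain ⟨b, hb, hjb⟩ := ht
  refine ⟨(a, b), ⟨ha, hb⟩, ?_⟩
  rintro ⟨x, y⟩ ⟨hx, hy⟩
  obtain ⟨γ1, h1⟩ := hja hx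
  obtain ⟨γ2, h2⟩ := hjb hy
  exact ⟨γ1.prod γ2, fun u => ⟨h1 u, h2 u⟩⟩

lemma pc_half {J' : Set ↥(Set.Ioo (-1:ℝ) 1)} (hJ : IsPathConnected J')
    (h0 : (⟨0, by norm_num⟩ : ↥(Set.Ioo (-1:ℝ) 1)) ∈ J') :
    IsPathConnected (J' ∩ {p : ↥(Set.Ioo (-1:ℝ) 1) | 0 ≤ (p : ℝ)}) := by
  have himg : IsPathConnected (Subtype.val '' J') := hJ.image continuous_subtype_val
  have hord : (Subtype.val '' J' : Set ℝ).OrdConnected :=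
    himg.isConnected.isPreconnected.ordConnected
  refine ⟨⟨0, by norm_num⟩, ⟨h0, by norm_num⟩, ?_⟩
  rintro ⟨x, hxI⟩ ⟨hxJ, hx0⟩
  have hx0' : (0:ℝ) ≤ x := hx0
  have mem0 : (0:ℝ) ∈ Subtype.val '' J' := ⟨_, h0, rfl⟩
  have memx : (x:ℝ) ∈ Subtype.val '' J' := ⟨_, hxJ, rfl⟩
  have hseg : Set.Icc (0:ℝ) x ⊆ Subtype.val '' J' := hord.out mem0 memx
  have hmem : ∀ u : I, (u : ℝ) * x ∈ Set.Ioo (-1:ℝ) 1 := by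
    intro u
    constructor
    · nlinarith [u.2.1, u.2.2, hxI.1, hxI.2]
    · nlinarith [u.2.1, u.2.2, hxI.1, hxI.2]
  refine ⟨⟨⟨fun u => ⟨(u : ℝ) * x, hmem u⟩,
      (continuous_subtype_val.mul continuous_const).subtype_mk _⟩,
      Subtype.ext (by norm_num), Subtype.ext (by norm_num)⟩, ?_⟩
  intro u
  constructor
  · have hIcc : (u : ℝ) * x ∈ Set.Icc (0:ℝ) x := by
      constructor
      · exact mul_nonneg u.2.1 hx0'
      · nlinarith [u.2.1, u.2.2]
    obtain ⟨c, hc, hceq⟩ := hseg hIcc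
    have heq : (⟨(u : ℝ) * x, hmem u⟩ : ↥(Set.Ioo (-1:ℝ) 1)) = c := Subtype.ext hceq.symm
    show (⟨(u : ℝ) * x, hmem u⟩ : ↥(Set.Ioo (-1:ℝ) 1)) ∈ J'
    rw [heq]
    exact hc
  · exact mul_nonneg u.2.1 hx0'

lemma lpc_of_clean {M : Type} [TopologicalSpace M] [LocallyPathConnectedSpace M]
    {P : Set M} (hPc : IsClosed P)
    {U : Set M} (e : (↥(frontier P) × ↥(Set.Ioo (-1:ℝ) 1)) ≃ₜ ↥U)
    (hUo : IsOpen U) (hFU : frontier P ⊆ U)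
    (he0 : ∀ x : ↥(frontier P), ((e (x, ⟨0, by norm_num⟩) : M)) = (x : M))
    (heH : (fun z => ((e z : M))) '' {z : ↥(frontier P) × ↥(Set.Ioo (-1:ℝ) 1) | 0 ≤ (z.2 : ℝ)}
      = U ∩ P) :
    LocallyPathConnectedSpace ↥P := by
  classical
  let G : ↥(frontier P) × ↥(Set.Ioo (-1:ℝ) 1) → M := fun p => (e p : M)
  have hGemb : Topology.IsOpenEmbedding G :=
    hUo.isOpenEmbedding_subtypeVal.comp e.isOpenEmbedding
  haveI : LocallyPathConnectedSpace (↥(frontier P) × ↥(Set.Ioo (-1:ℝ) 1)) :=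
    hGemb.locallyPathConnectedSpace
  haveI : Nonempty ↥(Set.Ioo (-1:ℝ) 1) := ⟨⟨0, by norm_num⟩⟩
  haveI hFlpc : LocallyPathConnectedSpace ↥(frontier P) :=
    locPathConnectedSpace_fst (B := ↥(Set.Ioo (-1:ℝ) 1))
  haveI : LocallyPathConnectedSpace ↥(Set.Ioo (-1:ℝ) 1) :=
    (isOpen_Ioo (a := (-1:ℝ)) (b := 1)).locallyPathConnectedSpace
  rw [locallyPathConnectedSpace_iff_pathComponentIn_mem_nhds]
  intro z u hu hzu
  obtain ⟨u', hu'o, hu'⟩ := isOpen_induced_iff.mp hu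
  suffices hs : ∃ s : Set ↥P, s ∈ nhds z ∧ IsPathConnected s ∧ s ⊆ u ∧ z ∈ s by
    obtain ⟨s, hnh, hpc, hsu, hzs⟩ := hs
    exact Filter.mem_of_superset hnh (hpc.subset_pathComponentIn hzs hsu)
  have hzu' : (z : M) ∈ u' := by rw [← hu'] at hzu; exact hzu
  by_cases hzi : (z : M) ∈ interior P
  · -- interior case
    have hzmem : (z : M) ∈ u' ∩ interior P := ⟨hzu', hzi⟩
    set W := pathComponentIn (u' ∩ interior P) (z : M) with hW
    have hWo : IsOpen W := (hu'o.inter isOpen_interior).pathComponentIn _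
    have hWz : (z : M) ∈ W := mem_pathComponentIn_self hzmem
    have hWpc : IsPathConnected W := isPathConnected_pathComponentIn hzmem
    have hWP : W ⊆ P := fun y hy => interior_subset (pathComponentIn_subset hy).2
    refine ⟨Subtype.val ⁻¹' W,
      continuous_subtype_val.continuousAt.preimage_mem_nhds (hWo.mem_nhds hWz),
      isPathConnected_preimage_val hWP hWpc, ?_, hWz⟩
    rw [← hu']
    exact Set.preimage_mono (fun y hy => (pathComponentIn_subset hy).1)
  · -- frontier case
    have hzF : (z : M) ∈ frontier P := by
      rw [hPc.frontier_eq]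
      exact ⟨z.2, hzi⟩
    set zF : ↥(frontier P) := ⟨(z : M), hzF⟩ with hzFdef
    set I0 : ↥(Set.Ioo (-1:ℝ) 1) := ⟨0, by norm_num⟩ with hI0def
    have hGz : G (zF, I0) = (z : M) := he0 zF
    have hw : IsOpen (G ⁻¹' (u' ∩ U)) := (hu'o.inter hUo).preimage hGemb.continuous
    have hzw : (zF, I0) ∈ G ⁻¹' (u' ∩ U) := by
      show G (zF, I0) ∈ u' ∩ U
      rw [hGz]
      exact ⟨hzu', hFU hzF⟩
    obtain ⟨V, J, hVo, hJo, hzV, hzJ, hVJ⟩ := isOpen_prod_iff.mp hw zF I0 hzw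
    set V' := pathComponentIn V zF with hV'def
    set J' := pathComponentIn J I0 with hJ'def
    have hV'pc : IsPathConnected V' := isPathConnected_pathComponentIn hzV
    have hJ'pc : IsPathConnected J' := isPathConnected_pathComponentIn hzJ
    have hV'o : IsOpen V' := hVo.pathComponentIn _
    have hJ'o : IsOpen J' := hJo.pathComponentIn _
    have hJ''pc : IsPathConnected (J' ∩ {p : ↥(Set.Ioo (-1:ℝ) 1) | 0 ≤ (p : ℝ)}) :=
      pc_half hJ'pc (mem_pathComponentIn_self hzJ)
    set s0 := V' ×ˢ (J' ∩ {p : ↥(Set.Ioo (-1:ℝ) 1) | 0 ≤ (p : ℝ)}) with hs0def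
    have hs0pc : IsPathConnected s0 := pc_prod hV'pc hJ''pc
    have hs1pc : IsPathConnected (G '' s0) := hs0pc.image hGemb.continuous
    have hs1P : G '' s0 ⊆ P := by
      rintro _ ⟨p, hp, rfl⟩
      have : G p ∈ U ∩ P := by
        rw [← heH]
        exact ⟨p, hp.2.2, rfl⟩
      exact this.2
    have hs1u' : G '' s0 ⊆ u' := by
      rintro _ ⟨p, hp, rfl⟩
      have hpw : p ∈ G ⁻¹' (u' ∩ U) :=
        hVJ ⟨pathComponentIn_subset hp.1, pathComponentIn_subset hp.2.1⟩
      exact hpw.1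
    have hzs : z ∈ Subtype.val ⁻¹' (G '' s0) := by
      show (z : M) ∈ G '' s0
      exact ⟨(zF, I0), ⟨mem_pathComponentIn_self hzV,
        ⟨mem_pathComponentIn_self hzJ, le_refl (0:ℝ)⟩⟩, hGz⟩
    refine ⟨Subtype.val ⁻¹' (G '' s0), ?_, isPathConnected_preimage_val hs1P hs1pc, ?_, hzs⟩
    · have hTo : IsOpen (G '' (V' ×ˢ J')) := hGemb.isOpenMap _ (hV'o.prod hJ'o)
      have hzT : (z : M) ∈ G '' (V' ×ˢ J') := ⟨(zF, I0),
        ⟨mem_pathComponentIn_self hzV, mem_pathComponentIn_self hzJ⟩, hGz⟩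
      have hTs : (Subtype.val ⁻¹' (G '' (V' ×ˢ J')) : Set ↥P) ⊆ Subtype.val ⁻¹' (G '' s0) := by
        intro w hy
        obtain ⟨p, hp, hGp⟩ := hy
        have hyU : (w : M) ∈ U := by
          rw [← hGp]
          exact (e p).2
        have hyUP : (w : M) ∈ U ∩ P := ⟨hyU, w.2⟩
        rw [← heH] at hyUP
        obtain ⟨p', hp', hGp'⟩ := hyUP
        have hpp' : p' = p := hGemb.injective (hGp'.trans hGp.symm)
        subst hpp'
        exact ⟨p', ⟨hp.1, hp.2, hp'⟩, hGp⟩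
      exact Filter.mem_of_superset
        (continuous_subtype_val.continuousAt.preimage_mem_nhds (hTo.mem_nhds hzT)) hTs
    · rw [← hu']
      exact Set.preimage_mono hs1u'


lemma exists_joined_in_P {M : Type} [TopologicalSpace M] {P Q : Set M}
    [LocallyPathConnectedSpace ↥P]
    {k : ℕ} (Pc Qc : Fin k → Set M)
    (hPU : P = ⋃ j, Pc j)
    (hPcomp : ∀ j, ∃ x ∈ P, Pc j = connectedComponentIn P x)
    (hQcomp : ∀ j, ∃ x ∈ Q, Qc j = connectedComponentIn Q x)
    (hQcP : ∀ j, Qc j ⊆ interior (Pc j))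
    {x : M} (hx : x ∈ P) : ∃ y ∈ Q, JoinedIn P x y := by
  have hxU : x ∈ ⋃ j, Pc j := by rw [← hPU]; exact hx
  obtain ⟨j, hj⟩ := Set.mem_iUnion.mp hxU
  obtain ⟨x0, hx0P, hPcj⟩ := hPcomp j
  obtain ⟨y0, hy0Q, hQcj⟩ := hQcomp j
  have hy0mem : y0 ∈ Qc j := by rw [hQcj]; exact mem_connectedComponentIn hy0Q
  have hy0Pcj : y0 ∈ Pc j := interior_subset (hQcP j hy0mem)
  have hPcjP : Pc j ⊆ P := by rw [hPcj]; exact connectedComponentIn_subset _ _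
  have hy0P : y0 ∈ P := hPcjP hy0Pcj
  have hsub : ∀ (w : M) (hw : w ∈ P), w ∈ Pc j →
      (⟨w, hw⟩ : ↥P) ∈ connectedComponent (⟨x0, hx0P⟩ : ↥P) := by
    intro w hw hwj
    rw [hPcj, connectedComponentIn_eq_image hx0P] at hwj
    obtain ⟨c, hc, hceq⟩ := hwj
    rwa [show (⟨w, hw⟩ : ↥P) = c from Subtype.ext hceq.symm]
  have hj' := hsub x hx hj
  have hy' := hsub y0 hy0P hy0Pcj
  rw [← pathComponent_eq_connectedComponent] at hj' hy'
  have hJx : Joined (⟨x0, hx0P⟩ : ↥P) ⟨x, hx⟩ := hj'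
  have hJy : Joined (⟨x0, hx0P⟩ : ↥P) ⟨y0, hy0P⟩ := hy'
  obtain ⟨γ⟩ := hJx.symm.trans hJy
  exact ⟨y0, hy0Q, ⟨γ.map continuous_subtype_val, fun t => (γ t).2⟩⟩


end LamSurj

namespace LamSurj

variable {M : Type} [TopologicalSpace M]

lemma mem_W_left {N : Set M} {c : ℝ} {x : M} {t : ℝ} (hx : x ∈ N) : (x, t) ∈ WSet N c :=
  Or.inl ⟨hx, trivial⟩

lemma mem_W_top {N : Set M} {c : ℝ} {x : M} {t : ℝ} (h : c ≤ t) : (x, t) ∈ WSet N c :=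
  Or.inr ⟨trivial, Or.inr h⟩

lemma mem_W_bot {N : Set M} {c : ℝ} {x : M} {t : ℝ} (h : t ≤ -c) : (x, t) ∈ WSet N c :=
  Or.inr ⟨trivial, Or.inl h⟩

lemma W_cases {N : Set M} {c : ℝ} {z : M × ℝ} (hz : z ∈ WSet N c) :
    z.1 ∈ N ∨ z.2 ≤ -c ∨ c ≤ z.2 := by
  rcases hz with ⟨h, -⟩ | ⟨-, h | h⟩
  · exact Or.inl h
  · exact Or.inr (Or.inl h)
  · exact Or.inr (Or.inr h)

section App

variable {P Q : Set M} {q : M} {m m' : ℝ}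

/-- The basepoint `(q,0)` of `W(P,m)`. -/
def baseW (hqP : q ∈ P) : ↥(WSet P m) := ⟨(q, 0), mem_W_left hqP⟩

def topRoute (hqP : q ∈ P) (hm : 0 < m) (hmm' : m < m') (x : M) (t : ℝ) (ρx : Path q x)
    (hcond : x ∈ P ∨ m ≤ t) :
    Path (baseW hqP : ↥(WSet P m))
      ⟨(x, t), hcond.elim (fun h => mem_W_left h) (fun h => mem_W_top h)⟩ :=
  (vpath q 0 m' (fun r _ => mem_W_left hqP)).trans
    ((hpath ρx m' (fun _ => mem_W_top hmm'.le) (mem_W_top hmm'.le) (mem_W_top hmm'.le)).trans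
      (vpath x m' t (by
        rcases hcond with h | h
        · exact fun r _ => mem_W_left h
        · intro r hr
          refine mem_W_top ?_
          have h1 : m ≤ min m' t := le_min hmm'.le h
          exact h1.trans hr.1)))

def botRoute (hqP : q ∈ P) (hm : 0 < m) (hmm' : m < m') (x : M) (t : ℝ) (ρx : Path q x)
    (hcond : t ≤ -m) :
    Path (baseW hqP : ↥(WSet P m)) ⟨(x, t), mem_W_bot hcond⟩ :=
  (vpath q 0 (-m') (fun r _ => mem_W_left hqP)).trans
    ((hpath ρx (-m') (fun _ => mem_W_bot (by linarith)) (mem_W_bot (by linarith))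
        (mem_W_bot (by linarith))).trans
      (vpath x (-m') t (by
        intro r hr
        refine mem_W_bot (hr.2.trans ?_)
        exact max_le (by linarith) hcond)))

open Classical in
/-- The connecting path from the basepoint to an arbitrary point of `W(P,m)`. -/
def deltaW (hqP : q ∈ P) (hm : 0 < m) (hmm' : m < m') (ρ : ∀ x : M, Path q x)
    (z : ↥(WSet P m)) : Path (baseW hqP : ↥(WSet P m)) z :=
  if hc : (z : M × ℝ).1 ∈ P ∨ -m < (z : M × ℝ).2 then
    topRoute hqP hm hmm' (z : M × ℝ).1 (z : M × ℝ).2 (ρ (z : M × ℝ).1)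
      (by
        rcases hc with h | h
        · exact Or.inl h
        · rcases W_cases z.2 with h' | h' | h'
          · exact Or.inl h'
          · exact absurd h (by linarith)
          · exact Or.inr h')
  else
    botRoute hqP hm hmm' (z : M × ℝ).1 (z : M × ℝ).2 (ρ (z : M × ℝ).1)
      (by
        push_neg at hc
        exact hc.2)


lemma mix_lower {a b lo : ℝ} (hla : lo ≤ a) (hlb : lo ≤ b) (u : I) :
    lo ≤ (1 - (u:ℝ)) * a + u * b := by
  nlinarith [u.2.1, u.2.2, mul_nonneg (sub_nonneg.2 u.2.2) (sub_nonneg.2 hla),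
    mul_nonneg u.2.1 (sub_nonneg.2 hlb)]

lemma mix_upper {a b hi : ℝ} (hha : a ≤ hi) (hhb : b ≤ hi) (u : I) :
    (1 - (u:ℝ)) * a + u * b ≤ hi := by
  nlinarith [u.2.1, u.2.2, mul_nonneg (sub_nonneg.2 u.2.2) (sub_nonneg.2 hha),
    mul_nonneg u.2.1 (sub_nonneg.2 hhb)]

/-- The upper part of `W(P,m)`, an open subset of it. -/
def Uset (P : Set M) (m : ℝ) : Set ↥(WSet P m) := {z | -m < (z : M × ℝ).2}

/-- The lower part of `W(P,m)`, an open subset of it. -/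
def Vset (P : Set M) (m : ℝ) : Set ↥(WSet P m) := {z | (z : M × ℝ).2 < m}

lemma Uset_open (P : Set M) (m : ℝ) : IsOpen (Uset P m) :=
  isOpen_lt continuous_const (continuous_snd.comp continuous_subtype_val)

lemma Vset_open (P : Set M) (m : ℝ) : IsOpen (Vset P m) :=
  isOpen_lt (continuous_snd.comp continuous_subtype_val) continuous_const

lemma UV_cover (P : Set M) {m : ℝ} (hm : 0 < m) : Uset P m ∪ Vset P m = Set.univ := by
  ext z
  simp only [Uset, Vset, Set.mem_union, Set.mem_setOf_eq, Set.mem_univ, iff_true]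
  rcases lt_or_ge (-m) (z : M × ℝ).2 with h | h
  · exact Or.inl h
  · exact Or.inr (by linarith)

variable {P Q : Set M} {q : M} {m m' : ℝ}

/-- The upward deformation of `Uset`. -/
def DUmap (P : Set M) (m m' : ℝ) : C(↥(Uset P m) × I, ↥(WSet P m)) where
  toFun p := ⟨(((p.1 : ↥(WSet P m)) : M × ℝ).1,
      max (((p.1 : ↥(WSet P m)) : M × ℝ).2) (-m + (p.2 : ℝ) * (m + m'))), by
    rcases W_cases (p.1 : ↥(WSet P m)).2 with h | h | h
    · exact mem_W_left h
    · exact absurd (show -m < ((p.1 : ↥(WSet P m)) : M × ℝ).2 from p.1.2) (by linarith)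
    · exact mem_W_top (le_trans h (le_max_left _ _))⟩
  continuous_toFun := by
    have c0 : Continuous fun p : ↥(Uset P m) × I => ((p.1 : ↥(WSet P m)) : M × ℝ) :=
      continuous_subtype_val.comp (continuous_subtype_val.comp continuous_fst)
    apply Continuous.subtype_mk
    exact (continuous_fst.comp c0).prodMk ((continuous_snd.comp c0).max
      (continuous_const.add ((continuous_subtype_val.comp continuous_snd).mul continuous_const)))

/-- The downward deformation of `Vset`. -/
def DVmap (P : Set M) (m m' : ℝ) : C(↥(Vset P m) × I, ↥(WSet P m)) where
  toFun p := ⟨(((p.1 : ↥(WSet P m)) : M × ℝ).1,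
      min (((p.1 : ↥(WSet P m)) : M × ℝ).2) (m + (p.2 : ℝ) * (-(m + m')))), by
    rcases W_cases (p.1 : ↥(WSet P m)).2 with h | h | h
    · exact mem_W_left h
    · exact mem_W_bot (le_trans (min_le_left _ _) h)
    · exact absurd (show ((p.1 : ↥(WSet P m)) : M × ℝ).2 < m from p.1.2) (by linarith)⟩
  continuous_toFun := by
    have c0 : Continuous fun p : ↥(Vset P m) × I => ((p.1 : ↥(WSet P m)) : M × ℝ) :=
      continuous_subtype_val.comp (continuous_subtype_val.comp continuous_fst)
    apply Continuous.subtype_mk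
    exact (continuous_fst.comp c0).prodMk ((continuous_snd.comp c0).min
      (continuous_const.add ((continuous_subtype_val.comp continuous_snd).mul continuous_const)))

lemma DU0 (P : Set M) (m m' : ℝ) : ∀ w : ↥(Uset P m), DUmap P m m' (w, 0) = (w : ↥(WSet P m)) := by
  intro w
  apply Subtype.ext
  show (_, max _ (-m + ((0:I):ℝ) * (m + m'))) = _
  have h1 : -m + ((0:I):ℝ) * (m + m') = -m := by norm_num
  rw [h1, max_eq_left (le_of_lt (show -m < ((w : ↥(WSet P m)) : M × ℝ).2 from w.2))]

lemma DV0 (P : Set M) (m m' : ℝ) : ∀ w : ↥(Vset P m), DVmap P m m' (w, 0) = (w : ↥(WSet P m)) := by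
  intro w
  apply Subtype.ext
  show (_, min _ (m + ((0:I):ℝ) * (-(m + m')))) = _
  have h1 : m + ((0:I):ℝ) * (-(m + m')) = m := by norm_num
  rw [h1, min_eq_left (le_of_lt (show ((w : ↥(WSet P m)) : M × ℝ).2 < m from w.2))]

lemma DU1 {Q : Set M} (P : Set M) (m m' : ℝ) (hmm' : m < m') :
    ∀ w : ↥(Uset P m), ((DUmap P m m' (w, 1) : ↥(WSet P m)) : M × ℝ) ∈ WSet Q m' := by
  intro w
  show (_, max _ (-m + ((1:I):ℝ) * (m + m'))) ∈ WSet Q m'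
  have h1 : -m + ((1:I):ℝ) * (m + m') = m' := by norm_num
  rw [h1]
  exact mem_W_top (le_max_right _ _)

lemma DV1 {Q : Set M} (P : Set M) (m m' : ℝ) (hmm' : m < m') :
    ∀ w : ↥(Vset P m), ((DVmap P m m' (w, 1) : ↥(WSet P m)) : M × ℝ) ∈ WSet Q m' := by
  intro w
  show (_, min _ (m + ((1:I):ℝ) * (-(m + m')))) ∈ WSet Q m'
  have h1 : m + ((1:I):ℝ) * (-(m + m')) = -m' := by norm_num
  rw [h1]
  exact mem_W_bot (min_le_right _ _)


set_option maxHeartbeats 1000000 in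
lemma hdeltaU (hqP : q ∈ P) (hqQ : q ∈ Q) (hm : 0 < m) (hmm' : m < m')
    (ρ : ∀ x : M, Path q x) :
    ∀ w : ↥(Uset P m), ∃ η : Path (baseW hqP : ↥(WSet P m)) (DUmap P m m' (w, 1)),
      (∀ s, ((η s : ↥(WSet P m)) : M × ℝ) ∈ WSet Q m') ∧
      ((deltaW hqP hm hmm' ρ (w : ↥(WSet P m))).trans
        (trackOf (DUmap P m m') (DU0 P m m') w)).Homotopic η := by
  intro w
  set z : ↥(WSet P m) := (w : ↥(WSet P m)) with hzdef
  set x : M := (z : M × ℝ).1 with hxdef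
  set t : ℝ := (z : M × ℝ).2 with htdef
  have htm : -m < t := w.2
  have hcondTop : x ∈ P ∨ m ≤ t := by
    rcases W_cases z.2 with h | h | h
    · exact Or.inl h
    · exact absurd htm (by rw [htdef]; linarith)
    · exact Or.inr h
  have hc : (z : M × ℝ).1 ∈ P ∨ -m < (z : M × ℝ).2 := Or.inr htm
  set C : ℝ := max t (-m + ((1:I):ℝ) * (m + m')) with hCdef
  have hval : -m + ((1:I):ℝ) * (m + m') = m' := by norm_num
  have hm'C : m' ≤ C := by rw [hCdef, hval]; exact le_max_right _ _
  have htC : t ≤ C := le_max_left _ _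
  set L1 := vpath (S := WSet P m) q 0 m' (fun r _ => mem_W_left hqP) with hL1def
  set L2 := hpath (S := WSet P m) (ρ x) m' (fun _ => mem_W_top hmm'.le)
    (mem_W_top hmm'.le) (mem_W_top hmm'.le) with hL2def
  have hL3mem : ∀ r ∈ Set.uIcc m' t, (x, r) ∈ WSet P m := by
    intro r hr
    rcases hcondTop with h | h
    · exact mem_W_left h
    · exact mem_W_top (le_trans (le_min hmm'.le h) hr.1)
  set L3 := vpath (S := WSet P m) x m' t hL3mem with hL3def
  have hL3'mem : ∀ r ∈ Set.uIcc m' C, (x, r) ∈ WSet P m := by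
    intro r hr
    rcases hcondTop with h | h
    · exact mem_W_left h
    · refine mem_W_top (le_trans hmm'.le ?_)
      exact le_trans (le_of_eq (min_eq_left hm'C).symm) hr.1
  set L3' := vpath (S := WSet P m) x m' C hL3'mem with hL3'def
  set T := trackOf (DUmap P m m') (DU0 P m m') w with hTdef
  have hδz : deltaW hqP hm hmm' ρ z = L1.trans (L2.trans L3) := by
    unfold deltaW
    rw [dif_pos hc]
    rfl
  refine ⟨L1.trans (L2.trans L3'), ?_, ?_⟩
  · refine trans_mem (A := {zz : ↥(WSet P m) | (zz : M × ℝ) ∈ WSet Q m'})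
      (fun s => mem_W_left hqQ)
      (trans_mem (fun s => mem_W_top le_rfl) (fun s => mem_W_top (mix_lower le_rfl hm'C s)))
  · have hVERT : hcl L3 ≫ hcl T = hcl L3' := by
      rw [← hcl_trans]
      apply hcl_eq_iff.mpr
      refine vert_homotopic x (J := Set.Icc (min t m') C) (convex_Icc _ _) ?_ _ _ ?_ ?_ ?_ ?_
      · intro r hr
        rcases hcondTop with h | h
        · exact mem_W_left h
        · exact mem_W_top (le_trans (le_min h hmm'.le) hr.1)
      · exact trans_mem (A := {zz : ↥(WSet P m) | (zz : M × ℝ).1 = x})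
          (fun u => rfl) (fun u => rfl)
      · exact fun u => rfl
      · refine trans_mem (A := {zz : ↥(WSet P m) | (zz : M × ℝ).2 ∈ Set.Icc (min t m') C})
          (fun u => ⟨mix_lower (min_le_right t m') (min_le_left t m') u,
            mix_upper hm'C htC u⟩) (fun u => ⟨?_, ?_⟩)
        · exact le_trans (min_le_left t m') (le_max_left _ _)
        · refine max_le htC ?_
          have hu : -m + ((u : I) : ℝ) * (m + m') ≤ m' := by
            nlinarith [u.2.1, u.2.2]
          exact le_trans hu hm'C
      · exact fun u => ⟨mix_lower (min_le_right t m') (le_trans (min_le_right t m') hm'C) u,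
          mix_upper hm'C le_rfl u⟩
    apply homotopic_of_hcl_eq
    rw [hδz]
    show hcl ((L1.trans (L2.trans L3)).trans T) = hcl (L1.trans (L2.trans L3'))
    simp only [hcl_trans, Category.assoc]
    rw [hVERT]; rfl


lemma htpy_natural {X Y : Type} [TopologicalSpace X] [TopologicalSpace Y] {f g : C(Y, X)}
    (H : ContinuousMap.Homotopy f g) {a b : Y} (p : Path a b) :
    hcl (p.map f.continuous) ≫ hcl (H.evalAt b) =
      hcl (H.evalAt a) ≫ hcl (p.map g.continuous) := by
  have key := H.eq_diag_path (X := TopCat.of Y) (Y := TopCat.of X) (x₀ := a) (x₁ := b)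
    (⟦p⟧ : FundamentalGroupoid.mk a ⟶ FundamentalGroupoid.mk b)
  exact key.1.trans key.2.symm

/-- The constant-level embedding of `↥P` into `W(P,m)`. -/
def levelMapP (P : Set M) (m c : ℝ) (hmem : ∀ y : ↥P, ((y : M), c) ∈ WSet P m) :
    C(↥P, ↥(WSet P m)) :=
  ⟨fun y => ⟨((y : M), c), hmem y⟩,
    (continuous_subtype_val.prodMk continuous_const).subtype_mk _⟩

/-- The straight-line homotopy between two constant-level embeddings. -/
def levelHomotopy (P : Set M) (m c c' : ℝ) (hmem : ∀ y : ↥P, ((y : M), c) ∈ WSet P m)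
    (hmem' : ∀ y : ↥P, ((y : M), c') ∈ WSet P m) :
    ContinuousMap.Homotopy (levelMapP P m c hmem) (levelMapP P m c' hmem') where
  toFun p := ⟨((p.2 : M), (1 - (p.1 : ℝ)) * c + (p.1 : ℝ) * c'), mem_W_left p.2.2⟩
  continuous_toFun := ((continuous_subtype_val.comp continuous_snd).prodMk
    (((continuous_const.sub (continuous_subtype_val.comp continuous_fst)).mul
      continuous_const).add
    ((continuous_subtype_val.comp continuous_fst).mul continuous_const))).subtype_mk _
  map_zero_left y := Subtype.ext (by norm_num [levelMapP])
  map_one_left y := Subtype.ext (by norm_num [levelMapP])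

set_option maxHeartbeats 2000000 in
lemma hdeltaV (hqP : q ∈ P) (hqQ : q ∈ Q) (hm : 0 < m) (hmm' : m < m')
    (ρ : ∀ x : M, Path q x) (hJQ : ∀ x ∈ P, ∃ y ∈ Q, JoinedIn P x y) :
    ∀ w : ↥(Vset P m), ∃ η : Path (baseW hqP : ↥(WSet P m)) (DVmap P m m' (w, 1)),
      (∀ s, ((η s : ↥(WSet P m)) : M × ℝ) ∈ WSet Q m') ∧
      ((deltaW hqP hm hmm' ρ (w : ↥(WSet P m))).trans
        (trackOf (DVmap P m m') (DV0 P m m') w)).Homotopic η := by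
  intro w
  set z : ↥(WSet P m) := (w : ↥(WSet P m)) with hzdef
  set x : M := (z : M × ℝ).1 with hxdef
  set t : ℝ := (z : M × ℝ).2 with htdef
  have htm : t < m := w.2
  set Cm : ℝ := min t (m + ((1:I):ℝ) * (-(m + m'))) with hCmdef
  have hvalm : m + ((1:I):ℝ) * (-(m + m')) = -m' := by norm_num
  have hCm' : Cm ≤ -m' := by rw [hCmdef, hvalm]; exact min_le_right _ _
  have hCt : Cm ≤ t := min_le_left _ _
  set T := trackOf (DVmap P m m') (DV0 P m m') w with hTdef
  by_cases hc : (z : M × ℝ).1 ∈ P ∨ -m < (z : M × ℝ).2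
  · -- the first coordinate is in P; use top route and reroute the crossing through Q
    have hxP : x ∈ P := by
      rcases hc with h | h
      · exact h
      · rcases W_cases z.2 with h' | h' | h'
        · exact h'
        · exact absurd h (not_lt.mpr h')
        · exact absurd htm (not_lt.mpr h')
    obtain ⟨y, hyQ, hJ⟩ := hJQ x hxP
    have hyP : y ∈ P := hJ.target_mem
    set κM := hJ.somePath with hκdef
    have hκmem : ∀ u, κM u ∈ P := fun u => hJ.somePath_mem u
    set κ := liftPath κM hκmem hxP hyP with hκ2
    set fmap : C(↥P, ↥(WSet P m)) :=
      levelMapP P m m' (fun y' => mem_W_top hmm'.le) with hfdef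
    set gmap : C(↥P, ↥(WSet P m)) :=
      levelMapP P m Cm (fun y' => mem_W_left y'.2) with hgdef
    set H : ContinuousMap.Homotopy fmap gmap :=
      levelHomotopy P m m' Cm (fun y' => mem_W_top hmm'.le) (fun y' => mem_W_left y'.2)
      with hHdef
    have hnat := htpy_natural H κ
    set L1 := vpath (S := WSet P m) q 0 m' (fun r _ => mem_W_left hqP) with hL1def
    set L2 := hpath (S := WSet P m) (ρ x) m' (fun _ => mem_W_top hmm'.le)
      (mem_W_top hmm'.le) (mem_W_top hmm'.le) with hL2def
    set L3 := vpath (S := WSet P m) x m' t (fun r _ => mem_W_left hxP) with hL3def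
    have hδz : deltaW hqP hm hmm' ρ z = L1.trans (L2.trans L3) := by
      unfold deltaW
      rw [dif_pos hc]
      rfl
    refine ⟨L1.trans (L2.trans ((κ.map fmap.continuous).trans
      ((H.evalAt ⟨y, hyP⟩).trans (κ.map gmap.continuous).symm))), ?_, ?_⟩
    · refine trans_mem (A := {zz : ↥(WSet P m) | (zz : M × ℝ) ∈ WSet Q m'})
        (fun s => mem_W_left hqQ)
        (trans_mem (fun s => mem_W_top le_rfl)
          (trans_mem (fun s => mem_W_top le_rfl)
            (trans_mem (fun s => mem_W_left hyQ) (fun s => mem_W_bot hCm'))))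
    · have hVERT : hcl L3 ≫ hcl T = hcl (H.evalAt ⟨x, hxP⟩) := by
        rw [← hcl_trans]
        apply hcl_eq_iff.mpr
        refine vert_homotopic x (J := Set.Icc Cm m') (convex_Icc _ _)
          (fun r _ => mem_W_left hxP) _ _ ?_ ?_ ?_ ?_
        · exact trans_mem (A := {zz : ↥(WSet P m) | (zz : M × ℝ).1 = x})
            (fun u => rfl) (fun u => rfl)
        · exact fun u => rfl
        · refine trans_mem (A := {zz : ↥(WSet P m) | (zz : M × ℝ).2 ∈ Set.Icc Cm m'})
            (fun u => ⟨mix_lower (hCm'.trans (by linarith)) hCt u,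
              mix_upper le_rfl (by linarith) u⟩) (fun u => ⟨?_, ?_⟩)
          · refine le_min hCt (hCm'.trans ?_)
            nlinarith [u.2.1, u.2.2]
          · exact le_trans (min_le_left _ _) (by linarith)
        · exact fun u => ⟨mix_lower (hCm'.trans (by linarith)) le_rfl u,
            mix_upper le_rfl (hCm'.trans (by linarith)) u⟩
      have hVx : hcl (H.evalAt ⟨x, hxP⟩) =
          hcl (κ.map fmap.continuous) ≫ hcl (H.evalAt ⟨y, hyP⟩) ≫
            Groupoid.inv (hcl (κ.map gmap.continuous)) := by
        calc hcl (H.evalAt ⟨x, hxP⟩)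
            = (hcl (H.evalAt ⟨x, hxP⟩) ≫ hcl (κ.map gmap.continuous)) ≫
              Groupoid.inv (hcl (κ.map gmap.continuous)) := by
              rw [Category.assoc, Groupoid.comp_inv, Category.comp_id]
          _ = (hcl (κ.map fmap.continuous) ≫ hcl (H.evalAt ⟨y, hyP⟩)) ≫
              Groupoid.inv (hcl (κ.map gmap.continuous)) := by rw [hnat]
          _ = hcl (κ.map fmap.continuous) ≫ hcl (H.evalAt ⟨y, hyP⟩) ≫
              Groupoid.inv (hcl (κ.map gmap.continuous)) := by rw [Category.assoc]
      have hfinal : hcl L3 ≫ hcl T = hcl (κ.map fmap.continuous) ≫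
          hcl (H.evalAt ⟨y, hyP⟩) ≫ Groupoid.inv (hcl (κ.map gmap.continuous)) := by
        rw [hVERT, hVx]
      apply homotopic_of_hcl_eq
      rw [hδz]
      show hcl ((L1.trans (L2.trans L3)).trans T) = hcl L1 ≫ hcl L2 ≫
        hcl (κ.map fmap.continuous) ≫ hcl (H.evalAt ⟨y, hyP⟩) ≫ hcl (κ.map gmap.continuous).symm
      simp only [hcl_trans, Category.assoc]
      rw [← hcl_inv, hfinal]; rfl
  · -- bottom route
    have htb : t ≤ -m := by
      push_neg at hc
      exact hc.2
    set B1 := vpath (S := WSet P m) q 0 (-m') (fun r _ => mem_W_left hqP) with hB1def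
    set B2 := hpath (S := WSet P m) (ρ x) (-m') (fun _ => mem_W_bot (by linarith))
      (mem_W_bot (by linarith)) (mem_W_bot (by linarith)) with hB2def
    have hB3mem : ∀ r ∈ Set.uIcc (-m') t, (x, r) ∈ WSet P m := by
      intro r hr
      exact mem_W_bot (hr.2.trans (max_le (by linarith) htb))
    set B3 := vpath (S := WSet P m) x (-m') t hB3mem with hB3def
    have hB3'mem : ∀ r ∈ Set.uIcc (-m') Cm, (x, r) ∈ WSet P m := by
      intro r hr
      exact mem_W_bot (hr.2.trans (max_le (by linarith) (by linarith)))
    set B3' := vpath (S := WSet P m) x (-m') Cm hB3'mem with hB3'def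
    have hδz : deltaW hqP hm hmm' ρ z = B1.trans (B2.trans B3) := by
      unfold deltaW
      rw [dif_neg hc]
      rfl
    refine ⟨B1.trans (B2.trans B3'), ?_, ?_⟩
    · refine trans_mem (A := {zz : ↥(WSet P m) | (zz : M × ℝ) ∈ WSet Q m'})
        (fun s => mem_W_left hqQ)
        (trans_mem (fun s => mem_W_bot le_rfl)
          (fun s => mem_W_bot (mix_upper le_rfl hCm' s)))
    · have hVERT : hcl B3 ≫ hcl T = hcl B3' := by
        rw [← hcl_trans]
        apply hcl_eq_iff.mpr
        refine vert_homotopic x (J := Set.Icc Cm (-m)) (convex_Icc _ _)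
          (fun r hr => mem_W_bot hr.2) _ _ ?_ ?_ ?_ ?_
        · exact trans_mem (A := {zz : ↥(WSet P m) | (zz : M × ℝ).1 = x})
            (fun u => rfl) (fun u => rfl)
        · exact fun u => rfl
        · refine trans_mem (A := {zz : ↥(WSet P m) | (zz : M × ℝ).2 ∈ Set.Icc Cm (-m)})
            (fun u => ⟨mix_lower (by linarith) hCt u, mix_upper (by linarith) htb u⟩)
            (fun u => ⟨?_, ?_⟩)
          · refine le_min hCt (hCm'.trans ?_)
            nlinarith [u.2.1, u.2.2]
          · exact le_trans (min_le_left _ _) htb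
        · exact fun u => ⟨mix_lower (by linarith) le_rfl u,
            mix_upper (by linarith) (by linarith) u⟩
      apply homotopic_of_hcl_eq
      rw [hδz]
      show hcl ((B1.trans (B2.trans B3)).trans T) = hcl (B1.trans (B2.trans B3'))
      simp only [hcl_trans, Category.assoc]
      rw [hVERT]; rfl

end App

end LamSurj


namespace LamSurj

lemma surj_comp_equiv {G H K : Type} [Group G] [Group H] [Group K] (E : H ≃* K) (F : G →* H)
    (hF : Function.Surjective F) : Function.Surjective (E.toMonoidHom.comp F) := by
  intro g
  obtain ⟨a, ha⟩ := hF (E.symm g)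
  refine ⟨a, ?_⟩
  rw [MonoidHom.comp_apply, ha]
  simp

set_option maxHeartbeats 1000000 in
lemma main_core {M : Type} [TopologicalSpace M] [PathConnectedSpace M]
    {P Q : Set M} (hJQ : ∀ x ∈ P, ∃ y ∈ Q, JoinedIn P x y)
    {q : M} (hqQ : q ∈ Q) (hqP : q ∈ P)
    {m m' : ℝ} (hm : 0 < m) (hmm' : m < m')
    (γ : Path (baseW hqP : ↥(WSet P m)) (baseW hqP)) :
    ∃ η : Path (baseW hqP : ↥(WSet P m)) (baseW hqP),
      (∀ s, ((η s : ↥(WSet P m)) : M × ℝ) ∈ WSet Q m') ∧ γ.Homotopic η := by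
  classical
  set ρ : ∀ x : M, Path q x := fun x => PathConnectedSpace.somePath q x with hρ
  have hδA : ∀ s, (deltaW hqP hm hmm' ρ (baseW hqP)) s ∈
      {zz : ↥(WSet P m) | (zz : M × ℝ) ∈ WSet Q m'} := by
    have hc : ((baseW hqP : ↥(WSet P m)) : M × ℝ).1 ∈ P ∨
        -m < ((baseW hqP : ↥(WSet P m)) : M × ℝ).2 := Or.inl hqP
    have hδz : deltaW hqP hm hmm' ρ (baseW hqP) =
        (vpath (S := WSet P m) q 0 m' (fun r _ => mem_W_left hqP)).trans
          ((hpath (S := WSet P m) (ρ q) m' (fun _ => mem_W_top hmm'.le)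
            (mem_W_top hmm'.le) (mem_W_top hmm'.le)).trans
            (vpath (S := WSet P m) q m' 0 (fun r _ => mem_W_left hqP))) := by
      unfold deltaW
      rw [dif_pos hc]
      rfl
    rw [hδz]
    exact trans_mem (fun s => mem_W_left hqQ)
      (trans_mem (fun s => mem_W_top le_rfl) (fun s => mem_W_left hqQ))
  exact core (Uset_open P m) (Vset_open P m) (UV_cover P hm)
    (mem_W_left hqQ)
    (DUmap P m m') (DU0 P m m') (DU1 P m m' hmm')
    (DVmap P m m') (DV0 P m m') (DV1 P m m' hmm')
    (deltaW hqP hm hmm' ρ) hδA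
    (hdeltaU hqP hqQ hm hmm' ρ) (hdeltaV hqP hqQ hm hmm' ρ hJQ) γ

end LamSurj

theorem lambda_surjective_k_ended (n : ℕ) (M : Type) [TopologicalSpace M]
    (hM : IsOpenNManifold n M) (hMconn : ConnectedSpace M)
    (k : ℕ) (hk : 0 < k)
    (P Q : Set M) (hP : IsCleanNbhdOfInf P) (hQ : IsCleanNbhdOfInf Q)
    (Pc Qc : Fin k → Set M)
    (hPU : P = ⋃ j, Pc j) (hQU : Q = ⋃ j, Qc j)
    (hPcomp : ∀ j, ∃ x ∈ P, Pc j = connectedComponentIn P x)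
    (hQcomp : ∀ j, ∃ x ∈ Q, Qc j = connectedComponentIn Q x)
    (hPinj : Function.Injective Pc) (hQinj : Function.Injective Qc)
    (hPnc : ∀ j, ¬ IsCompact (closure (Pc j))) (hQnc : ∀ j, ¬ IsCompact (closure (Qc j)))
    (hPfr : ∀ j, IsConnected (frontier (Pc j))) (hQfr : ∀ j, IsConnected (frontier (Qc j)))
    (hQcP : ∀ j, Qc j ⊆ interior (Pc j))
    (p q : M) (hp : p ∈ frontier (Pc ⟨0, hk⟩)) (hq : q ∈ frontier (Qc ⟨0, hk⟩))
    (α : Path p q) (hα : ∀ t : I, α t ∈ closure (Pc ⟨0, hk⟩ \ Qc ⟨0, hk⟩))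
    (m m' : ℝ) (hm : 0 < m) (hmm' : m < m') :
    Function.Surjective
      ((basepointChange (pathZeroIn α (S := WSet P m) (by
          intro t
          have h1 : Pc ⟨0, hk⟩ ⊆ P := by
            rw [hPU]; exact Set.subset_iUnion Pc ⟨0, hk⟩
          exact Or.inl ⟨hP.1.closure_subset
            (closure_mono (Set.diff_subset.trans h1) (hα t)), Set.mem_univ _⟩))).toMonoidHom.comp
        (indHom (inclCM (WSet_mono (P := P) (Q := Q) (by
            rw [hQU, hPU]
            exact Set.iUnion_mono fun j => (hQcP j).trans interior_subset) hmm'.le))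
          ⟨(q, 0), by
            have h1 : Qc ⟨0, hk⟩ ⊆ Q := by
              rw [hQU]; exact Set.subset_iUnion Qc ⟨0, hk⟩
            exact Or.inl ⟨hQ.1.closure_subset
              (closure_mono h1 (frontier_subset_closure hq)), Set.mem_univ _⟩⟩)) := by
  classical
  haveI hMlpc : LocallyPathConnectedSpace M := LamSurj.lpc_of_charts hM.2.2.2
  haveI : PathConnectedSpace M := pathConnectedSpace_iff_connectedSpace.mpr hMconn
  obtain ⟨hPclosed, hPcpt, U0, e, hU0o, hFU0, he0, heH⟩ := hP
  haveI : LocallyPathConnectedSpace ↥P := LamSurj.lpc_of_clean hPclosed e hU0o hFU0 he0 heH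
  have hQsub : ∀ j, Qc j ⊆ Q := fun j => by rw [hQU]; exact Set.subset_iUnion Qc j
  have hqQ : q ∈ Q := hQ.1.closure_subset
    (closure_mono (hQsub ⟨0, hk⟩) (frontier_subset_closure hq))
  have hQP : Q ⊆ interior P := by
    rw [hQU]
    refine Set.iUnion_subset fun j => (hQcP j).trans (interior_mono ?_)
    rw [hPU]
    exact Set.subset_iUnion Pc j
  have hqP : q ∈ P := interior_subset (hQP hqQ)
  have hJQ : ∀ x ∈ P, ∃ y ∈ Q, JoinedIn P x y := fun x hx =>
    LamSurj.exists_joined_in_P Pc Qc hPU hPcomp hQcomp hQcP hx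
  have hST : WSet Q m' ⊆ WSet P m :=
    WSet_mono (by
      rw [hQU, hPU]
      exact Set.iUnion_mono fun j => (hQcP j).trans interior_subset) hmm'.le
  have hsurj : Function.Surjective (indHom (inclCM hST)
      (⟨(q, 0), Or.inl ⟨hqQ, trivial⟩⟩ : ↥(WSet Q m'))) := by
    apply LamSurj.glue_surj
    intro γ
    exact LamSurj.main_core hJQ hqQ hqP hm hmm' γ
  exact LamSurj.surj_comp_equiv _ _ hsurj


end
end
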